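/- arXiv:2010.03716 — 5 statements merged into one kernel-verified Lean document; each statement's English description precedes it below -/
import Mathlib

section
/- Let G be a simple connected positively curved (in the Lin–Lu–Yau sense) planar graph, and let xy be an edge with deg(x) ≥ deg(y). Suppose S ⊆ Γ(y)∖{x} with |S| = s and |S ∩ Γ(x)| = k. Then |Γ(S) ∩ Γ(x)| > (s/deg(y))·deg(x) − (k + 1 + |Γ(x,y)|) + |Γ(S) ∩ Γ(x,y)|. -/
open Filter Set

variable {V : Type*}

-- The `α`-lazy random walk distribution at vertex `x`.
open Classical in
noncomputable def lazyWalk (G : SimpleGraph V) [G.LocallyFinite] (α : ℝ) (x : V) : V → ℝ :=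
  fun v => if v = x then α else if G.Adj x v then (1 - α) / (G.degree x : ℝ) else 0

/-- `A` is a coupling between the finitely supported distributions `m₁` and `m₂`. -/
def IsCoupling (m₁ m₂ : V → ℝ) (A : V → V → ℝ) : Prop :=
  (Function.support fun p : V × V => A p.1 p.2).Finite ∧
  (∀ x y, 0 ≤ A x y ∧ A x y ≤ 1) ∧
  (∀ x, ∑ᶠ y, A x y = m₁ x) ∧
  (∀ y, ∑ᶠ x, A x y = m₂ y)

/-- The transportation (Wasserstein) distance between two distributions on `V`,
with respect to the graph distance of `G`. -/
noncomputable def transportDist (G : SimpleGraph V) (m₁ m₂ : V → ℝ) : ℝ :=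
  sInf {w : ℝ | ∃ A : V → V → ℝ, IsCoupling m₁ m₂ A ∧
    w = ∑ᶠ p : V × V, A p.1 p.2 * (G.dist p.1 p.2 : ℝ)}

/-- The `α`-Ricci curvature `κ_α(x,y)`. -/
noncomputable def alphaRicci (G : SimpleGraph V) [G.LocallyFinite] (α : ℝ) (x y : V) : ℝ :=
  1 - transportDist G (lazyWalk G α x) (lazyWalk G α y) / (G.dist x y : ℝ)

/-- `κ` is the Lin–Lu–Yau Ricci curvature of the pair `(x,y)`:
the limit of `κ_α(x,y)/(1-α)` as `α → 1⁻`. -/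
def HasLLYCurv (G : SimpleGraph V) [G.LocallyFinite] (x y : V) (κ : ℝ) : Prop :=
  Tendsto (fun α : ℝ => alphaRicci G α x y / (1 - α)) (nhdsWithin 1 (Set.Iio 1)) (nhds κ)

/-- `G` is positively curved: every edge has positive Lin–Lu–Yau Ricci curvature. -/
def PositivelyCurved (G : SimpleGraph V) [G.LocallyFinite] : Prop :=
  ∀ ⦃x y : V⦄, G.Adj x y → ∃ κ : ℝ, 0 < κ ∧ HasLLYCurv G x y κ

/-- `G` is planar: it admits a topological embedding in the plane, i.e. an injective
placement of the vertices together with arcs for the edges, where arcs are injective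
continuous curves joining the endpoints, not passing through any other vertex, and
two arcs of distinct edges meet only in common endpoints. -/
def IsPlanar (G : SimpleGraph V) : Prop :=
  ∃ (f : V → ℝ × ℝ) (e : ∀ u v : V, G.Adj u v → Set.Icc (0:ℝ) 1 → ℝ × ℝ),
    Function.Injective f ∧
    (∀ u v (h : G.Adj u v), Continuous (e u v h)) ∧
    (∀ u v (h : G.Adj u v), Function.Injective (e u v h)) ∧
    (∀ u v (h : G.Adj u v),
      e u v h ⟨0, Set.left_mem_Icc.mpr zero_le_one⟩ = f u ∧
      e u v h ⟨1, Set.right_mem_Icc.mpr zero_le_one⟩ = f v) ∧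
    (∀ u v (h : G.Adj u v) (w : V), w ≠ u → w ≠ v → f w ∉ Set.range (e u v h)) ∧
    (∀ u v (h : G.Adj u v) (u' v' : V) (h' : G.Adj u' v'), ({u, v} : Set V) ≠ {u', v'} →
      Set.range (e u v h) ∩ Set.range (e u' v' h') ⊆ (f '' {u, v}) ∩ (f '' {u', v'}))

/-- The neighborhood `Γ(S)` of a set of vertices `S`. -/
def setNbhd (G : SimpleGraph V) (S : Set V) : Set V := {u : V | ∃ w ∈ S, G.Adj w u}

/-! Positive curvature of the edge `xy` gives `W(m_x^α, m_y^α) < 1` for some `α < 1`, so by weak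
Kantorovich duality every 1-Lipschitz `f` with `f x = f y + 1` satisfies
`avg_{Γ(x)} f - avg_{Γ(y)} f < 1`. Take for `f` the potential that is `-1` on `T = S ∪ {y}`, `0` on
`Γ(T) \ T` and `1` elsewhere: its sum over `Γ(y)` is `-s`, its sum over `Γ(x)` is
`deg x - |Γ(x) ∩ (Γ(S) ∪ Γ(y))| - (k + 1)`, and inclusion–exclusion for
`Γ(x) ∩ (Γ(S) ∪ Γ(y))` turns the resulting inequality into the claim. -/

section LazyWalk

variable {G : SimpleGraph V} [G.LocallyFinite]

lemma lazyWalk_self (α : ℝ) (z : V) : lazyWalk G α z z = α := by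
  simp [lazyWalk]

lemma lazyWalk_of_adj (α : ℝ) {z v : V} (h : G.Adj z v) :
    lazyWalk G α z v = (1 - α) / G.degree z := by
  simp [lazyWalk, h, h.ne']

lemma support_lazyWalk_subset (α : ℝ) (z : V) :
    Function.support (lazyWalk G α z) ⊆ insert z (G.neighborSet z) := by
  intro v hv
  by_contra h
  simp only [mem_insert_iff, SimpleGraph.mem_neighborSet, not_or] at h
  simp [lazyWalk, h.1, h.2] at hv

lemma finite_support_lazyWalk (α : ℝ) (z : V) : (Function.support (lazyWalk G α z)).Finite :=
  ((G.neighborSet z).toFinite.insert z).subset (support_lazyWalk_subset α z)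

lemma lazyWalk_nonneg {α : ℝ} (h₀ : 0 ≤ α) (h₁ : α ≤ 1) (z v : V) : 0 ≤ lazyWalk G α z v := by
  unfold lazyWalk
  split_ifs
  · exact h₀
  · exact div_nonneg (sub_nonneg.mpr h₁) (Nat.cast_nonneg _)
  · exact le_rfl

lemma finsum_lazyWalk_mul (α : ℝ) (z : V) (f : V → ℝ) :
    ∑ᶠ u, lazyWalk G α z u * f u
      = α * f z + (1 - α) * ((∑ v ∈ G.neighborFinset z, f v) / G.degree z) := by
  classical
  have hsupp : (Function.support fun u => lazyWalk G α z u * f u)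
      ⊆ ↑(insert z (G.neighborFinset z)) := by
    refine (Function.support_mul_subset_left _ _).trans ?_
    simpa using support_lazyWalk_subset α z
  rw [finsum_eq_sum_of_support_subset _ hsupp, Finset.sum_insert (by simp), lazyWalk_self,
    Finset.sum_congr rfl fun v hv => by
      rw [lazyWalk_of_adj α ((G.mem_neighborFinset z v).mp hv)], ← Finset.mul_sum]
  ring

lemma finsum_lazyWalk {z : V} (hz : 0 < G.degree z) (α : ℝ) : ∑ᶠ u, lazyWalk G α z u = 1 := by
  have h := finsum_lazyWalk_mul (G := G) α z 1
  simp only [Pi.one_apply, mul_one, Finset.sum_const, nsmul_eq_mul,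
    G.card_neighborFinset_eq_degree] at h
  rw [h, div_self (by positivity)]
  ring

end LazyWalk

lemma isCoupling_mul {m₁ m₂ : V → ℝ} (hfin₁ : (Function.support m₁).Finite)
    (hfin₂ : (Function.support m₂).Finite) (hnonneg₁ : ∀ u, 0 ≤ m₁ u) (hnonneg₂ : ∀ v, 0 ≤ m₂ v)
    (hsum₁ : ∑ᶠ u, m₁ u = 1) (hsum₂ : ∑ᶠ v, m₂ v = 1) :
    IsCoupling m₁ m₂ (fun u v => m₁ u * m₂ v) := by
  have hle₁ : ∀ u, m₁ u ≤ 1 := fun u => hsum₁ ▸ single_le_finsum u hfin₁ hnonneg₁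
  have hle₂ : ∀ v, m₂ v ≤ 1 := fun v => hsum₂ ▸ single_le_finsum v hfin₂ hnonneg₂
  refine ⟨(hfin₁.prod hfin₂).subset fun p hp => ?_, fun u v => ?_, fun u => ?_, fun v => ?_⟩
  · exact ⟨left_ne_zero_of_mul hp, right_ne_zero_of_mul hp⟩
  · exact ⟨mul_nonneg (hnonneg₁ u) (hnonneg₂ v),
      mul_le_one₀ (hle₁ u) (hnonneg₂ v) (hle₂ v)⟩
  · rw [← mul_finsum, hsum₂, mul_one]
  · rw [← finsum_mul, hsum₁, one_mul]

namespace IsCoupling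

variable {m₁ m₂ : V → ℝ} {A : V → V → ℝ}

lemma finsum_mul_fst (hA : IsCoupling m₁ m₂ A) (f : V → ℝ) :
    ∑ᶠ p : V × V, A p.1 p.2 * f p.1 = ∑ᶠ u, m₁ u * f u := by
  rw [finsum_curry _ (hA.1.subset (Function.support_mul_subset_left _ _))]
  simp_rw [← hA.2.2.1, finsum_mul]

lemma finsum_mul_snd (hA : IsCoupling m₁ m₂ A) (f : V → ℝ) :
    ∑ᶠ p : V × V, A p.1 p.2 * f p.2 = ∑ᶠ v, m₂ v * f v := by
  rw [← finsum_comp_equiv (Equiv.prodComm V V), finsum_curry]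
  · simp_rw [Equiv.prodComm_apply, Prod.fst_swap, Prod.snd_swap, ← hA.2.2.2, finsum_mul]
  · refine (hA.1.image Prod.swap).subset fun p hp => ⟨p.swap, ?_, p.swap_swap⟩
    exact left_ne_zero_of_mul hp

lemma sub_le_cost (G : SimpleGraph V) (hA : IsCoupling m₁ m₂ A) {f : V → ℝ}
    (hf : ∀ u v, f u - f v ≤ G.dist u v) :
    ∑ᶠ u, m₁ u * f u - ∑ᶠ v, m₂ v * f v ≤ ∑ᶠ p : V × V, A p.1 p.2 * G.dist p.1 p.2 := by
  have hfin : ∀ g : V × V → ℝ, (Function.support fun p => A p.1 p.2 * g p).Finite :=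
    fun g => hA.1.subset (Function.support_mul_subset_left _ _)
  rw [← hA.finsum_mul_fst, ← hA.finsum_mul_snd, ← finsum_sub_distrib (hfin _) (hfin _)]
  simp_rw [← mul_sub]
  exact finsum_le_finsum' (hfin fun p => f p.1 - f p.2) (hfin _) fun p =>
    mul_le_mul_of_nonneg_left (hf p.1 p.2) (hA.2.1 p.1 p.2).1

lemma sub_le_transportDist (G : SimpleGraph V) (hA : IsCoupling m₁ m₂ A) {f : V → ℝ}
    (hf : ∀ u v, f u - f v ≤ G.dist u v) :
    ∑ᶠ u, m₁ u * f u - ∑ᶠ v, m₂ v * f v ≤ transportDist G m₁ m₂ :=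
  le_csInf ⟨_, A, hA, rfl⟩ fun _ ⟨_, hB, hw⟩ => hw ▸ hB.sub_le_cost G hf

end IsCoupling

namespace PositivelyCurved

variable {G : SimpleGraph V} [G.LocallyFinite]

lemma exists_transportDist_lt_one (hpos : PositivelyCurved G) {x y : V} (hxy : G.Adj x y) :
    ∃ α ∈ Ioo (0 : ℝ) 1, transportDist G (lazyWalk G α x) (lazyWalk G α y) < 1 := by
  obtain ⟨κ, hκ, hlim⟩ := hpos hxy
  obtain ⟨α, hcurv, hα⟩ :=
    ((hlim.eventually (eventually_gt_nhds hκ)).and (Ioo_mem_nhdsLT zero_lt_one)).exists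
  refine ⟨α, hα, ?_⟩
  have hricci : 0 < alphaRicci G α x y := (div_pos_iff_of_pos_right (by linarith [hα.2])).mp hcurv
  simpa [alphaRicci, SimpleGraph.dist_eq_one_iff_adj.mpr hxy] using hricci

lemma sum_div_degree_sub_lt_one (hpos : PositivelyCurved G) {x y : V} (hxy : G.Adj x y)
    {f : V → ℝ} (hf : ∀ u v, f u - f v ≤ G.dist u v) (hfxy : f x = f y + 1) :
    (∑ v ∈ G.neighborFinset x, f v) / G.degree x
      - (∑ v ∈ G.neighborFinset y, f v) / G.degree y < 1 := by
  obtain ⟨α, ⟨hα₀, hα₁⟩, hW⟩ := hpos.exists_transportDist_lt_one hxy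
  have hcoupling := isCoupling_mul (finite_support_lazyWalk α x) (finite_support_lazyWalk α y)
    (lazyWalk_nonneg hα₀.le hα₁.le x) (lazyWalk_nonneg hα₀.le hα₁.le y)
    (finsum_lazyWalk (G.degree_pos_iff_exists_adj x |>.mpr ⟨y, hxy⟩) α)
    (finsum_lazyWalk (G.degree_pos_iff_exists_adj y |>.mpr ⟨x, hxy.symm⟩) α)
  have hdual := (hcoupling.sub_le_transportDist G hf).trans_lt hW
  rw [finsum_lazyWalk_mul, finsum_lazyWalk_mul, hfxy] at hdual
  refine lt_of_mul_lt_mul_left (a := 1 - α) ?_ (by linarith)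
  linarith

end PositivelyCurved

section Potential

variable {G : SimpleGraph V}

lemma sub_le_dist_of_adj (hconn : G.Connected) {f : V → ℝ}
    (hadj : ∀ u v, G.Adj u v → f u - f v ≤ 1) (hbound : ∀ u v, f u - f v ≤ 2) (u v : V) :
    f u - f v ≤ G.dist u v := by
  rcases eq_or_ne u v with rfl | hne
  · simp
  by_cases h : G.Adj u v
  · simpa [SimpleGraph.dist_eq_one_iff_adj.mpr h] using hadj u v h
  · have h2 : 2 ≤ G.dist u v := hconn.one_lt_dist_of_ne_of_not_adj hne h
    exact (hbound u v).trans (by exact_mod_cast h2)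

open Classical in
noncomputable def nbhdPotential (G : SimpleGraph V) (T : Set V) (v : V) : ℝ :=
  if v ∈ T then -1 else if v ∈ setNbhd G T then 0 else 1

lemma nbhdPotential_sub_le_dist (hconn : G.Connected) (T : Set V) (u v : V) :
    nbhdPotential G T u - nbhdPotential G T v ≤ G.dist u v := by
  refine sub_le_dist_of_adj hconn (fun u v huv => ?_) (fun u v => ?_) u v
  · have hT : v ∈ T → u ∈ setNbhd G T := fun hv => ⟨v, hv, huv.symm⟩
    unfold nbhdPotential
    split_ifs <;> simp_all; norm_num
  · unfold nbhdPotential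
    split_ifs <;> norm_num

open Classical in
lemma nbhdPotential_eq (T : Set V) (v : V) :
    nbhdPotential G T v
      = 1 - (if v ∈ T ∪ setNbhd G T then 1 else 0) - (if v ∈ T then 1 else 0) := by
  unfold nbhdPotential
  split_ifs <;> simp_all

lemma ncard_neighborSet_inter_eq_card_filter [G.LocallyFinite] (z : V) (A : Set V)
    [DecidablePred (· ∈ A)] :
    (G.neighborSet z ∩ A).ncard = ((G.neighborFinset z).filter (· ∈ A)).card := by
  rw [← Set.ncard_coe_finset, Finset.coe_filter]
  simp [Set.inter_def]

lemma sum_neighborFinset_nbhdPotential [G.LocallyFinite] (T : Set V) (z : V) :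
    ∑ v ∈ G.neighborFinset z, nbhdPotential G T v
      = G.degree z - (G.neighborSet z ∩ (T ∪ setNbhd G T)).ncard
        - (G.neighborSet z ∩ T).ncard := by
  classical
  simp only [nbhdPotential_eq, Finset.sum_sub_distrib, Finset.sum_const, Finset.sum_boole,
    ncard_neighborSet_inter_eq_card_filter, G.card_neighborFinset_eq_degree, nsmul_eq_mul,
    mul_one]

lemma setNbhd_insert (y : V) (S : Set V) :
    setNbhd G (insert y S) = G.neighborSet y ∪ setNbhd G S := by
  ext v
  simp [setNbhd]

end Potential

section InsertPotential

variable {G : SimpleGraph V} [G.LocallyFinite] {y : V} {S : Set V}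

lemma sum_neighborFinset_nbhdPotential_insert_self (hSy : S ⊆ G.neighborSet y) :
    ∑ v ∈ G.neighborFinset y, nbhdPotential G (insert y S) v = -S.ncard := by
  have hinter : G.neighborSet y ∩ (insert y S ∪ setNbhd G (insert y S)) = G.neighborSet y :=
    inter_eq_left.mpr fun v hv => Or.inr ⟨y, mem_insert y S, hv⟩
  have hinter_insert : G.neighborSet y ∩ insert y S = S := by
    rw [inter_insert_of_notMem (show y ∉ G.neighborSet y from G.irrefl), inter_eq_right.mpr hSy]
  rw [sum_neighborFinset_nbhdPotential, hinter, hinter_insert, ← G.coe_neighborFinset,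
    Set.ncard_coe_finset, G.card_neighborFinset_eq_degree]
  ring

lemma sum_neighborFinset_nbhdPotential_insert_of_adj {x : V} (hxy : G.Adj x y)
    (hSy : S ⊆ G.neighborSet y) (hSne : S.Nonempty) :
    ∑ v ∈ G.neighborFinset x, nbhdPotential G (insert y S) v
      = G.degree x - (setNbhd G S ∩ G.neighborSet x ∪ G.neighborSet x ∩ G.neighborSet y).ncard
        - ((S ∩ G.neighborSet x).ncard + 1) := by
  obtain ⟨w, hw⟩ := hSne
  have hunion : insert y S ∪ setNbhd G (insert y S) = G.neighborSet y ∪ setNbhd G S := by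
    rw [setNbhd_insert]
    refine Set.union_eq_right.mpr (insert_subset_iff.mpr ⟨Or.inr ⟨w, hw, (hSy hw).symm⟩, ?_⟩)
    exact hSy.trans subset_union_left
  have hcard_insert : (G.neighborSet x ∩ insert y S).ncard = (S ∩ G.neighborSet x).ncard + 1 := by
    rw [inter_insert_of_mem (show y ∈ G.neighborSet x from hxy), inter_comm,
      ncard_insert_of_notMem (fun h => G.irrefl (hSy h.1))
        ((G.neighborSet x).toFinite.inter_of_right S)]
  rw [sum_neighborFinset_nbhdPotential, hunion, hcard_insert, inter_union_distrib_left,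
    inter_comm (G.neighborSet x) (setNbhd G S), union_comm]
  push_cast
  ring

end InsertPotential

theorem neighborhood_expansion_general (G : SimpleGraph V) [G.LocallyFinite]
    (hconn : G.Connected) (hpos : PositivelyCurved G)
    (x y : V) (hxy : G.Adj x y)
    (S : Set V) (hS : S ⊆ G.neighborSet y \ {x}) (s k : ℕ)
    (hs : S.ncard = s) (hk : (S ∩ G.neighborSet x).ncard = k) :
    ((s : ℝ) / (G.degree y : ℝ)) * (G.degree x : ℝ)
        - ((k : ℝ) + 1 + ((G.neighborSet x ∩ G.neighborSet y).ncard : ℝ))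
        + (((setNbhd G S) ∩ (G.neighborSet x ∩ G.neighborSet y)).ncard : ℝ)
      < (((setNbhd G S) ∩ G.neighborSet x).ncard : ℝ) := by
  rcases S.eq_empty_or_nonempty with rfl | hSne
  · subst hs hk
    simp [setNbhd]
    exact (neg_nonpos.mpr (Nat.cast_nonneg _)).trans_lt one_pos
  have hSy : S ⊆ G.neighborSet y := fun v hv => (hS hv).1
  have hx_notMem : x ∉ insert y S := by
    rintro (h | h)
    exacts [hxy.ne h, (hS h).2 rfl]
  have hlt := hpos.sum_div_degree_sub_lt_one hxy (nbhdPotential_sub_le_dist hconn (insert y S))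
    (by simp [nbhdPotential, hx_notMem, setNbhd_insert, hxy.symm])
  rw [sum_neighborFinset_nbhdPotential_insert_of_adj hxy hSy hSne,
    sum_neighborFinset_nbhdPotential_insert_self hSy, hs, hk] at hlt
  have hcard := ncard_union_add_ncard_inter (setNbhd G S ∩ G.neighborSet x)
    (G.neighborSet x ∩ G.neighborSet y)
  rw [inter_assoc, ← inter_assoc (G.neighborSet x), inter_self] at hcard
  have hdx : (0 : ℝ) < G.degree x := by
    exact_mod_cast (G.degree_pos_iff_exists_adj x).mpr ⟨y, hxy⟩
  have hmul := mul_lt_mul_of_pos_right hlt hdx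
  rw [sub_mul, div_mul_cancel₀ _ hdx.ne', neg_div, neg_mul, one_mul] at hmul
  have hcardR := congrArg (Nat.cast (R := ℝ)) hcard
  push_cast at hcardR
  linarith

/-- Lemma 7 (key counting lemma): if `G` is a simple connected positively curved planar
graph, `xy` an edge with `deg x ≥ deg y`, `S ⊆ Γ(y)∖{x}` with `|S| = s` and
`|S ∩ Γ(x)| = k`, then
`|Γ(S) ∩ Γ(x)| > (s/deg y)·deg x − (k + 1 + |Γ(x,y)|) + |Γ(S) ∩ Γ(x,y)|`. -/
theorem neighborhood_expansion (G : SimpleGraph V) [G.LocallyFinite]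
    (hconn : G.Connected) (hplanar : IsPlanar G) (hpos : PositivelyCurved G)
    (x y : V) (hxy : G.Adj x y) (hdeg : G.degree y ≤ G.degree x)
    (S : Set V) (hS : S ⊆ G.neighborSet y \ {x}) (s k : ℕ)
    (hs : S.ncard = s) (hk : (S ∩ G.neighborSet x).ncard = k) :
    ((s : ℝ) / (G.degree y : ℝ)) * (G.degree x : ℝ)
        - ((k : ℝ) + 1 + ((G.neighborSet x ∩ G.neighborSet y).ncard : ℝ))
        + (((setNbhd G S) ∩ (G.neighborSet x ∩ G.neighborSet y)).ncard : ℝ)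
      < (((setNbhd G S) ∩ G.neighborSet x).ncard : ℝ) :=
  neighborhood_expansion_general G hconn hpos x y hxy S hS s k hs hk
end

section
/- Let G be a simple connected positively curved (in the Lin–Lu–Yau sense) graph with maximum degree Δ. Then κ_LLY(x,y) ≥ 1/(Δ(Δ−1)) for every edge xy of G. -/
/-!
Along `α = n/(n+1)` the lazy walks at the ends of an edge `xy` take values in `(1/D)ℕ`, where
`D = (n+1)·lcm(deg x, deg y)`. A transportation problem with integral masses has an integral
optimal plan: splitting every unit of mass into its own atom turns a real plan into a doubly
stochastic matrix, and by Birkhoff's theorem some permutation, i.e. some integral plan, costs no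
more. Hence `W(m_x, m_y) ∈ (1/D)ℕ` and `κ_α(x,y)/(1-α) ∈ (1/lcm(deg x, deg y))ℤ`. These
quotients converge to `κ_LLY(x,y) > 0`, so they are eventually positive, hence at least
`1/lcm(deg x, deg y) ≥ 1/(Δ(Δ-1))`.
-/

open Filter Set

variable {V : Type*}

open Finset

theorem exists_perm_sum_le_of_mem_doublyStochastic {R n : Type*} [Field R] [LinearOrder R]
    [IsStrictOrderedRing R] [Fintype n] [DecidableEq n] (c : n → n → R) {M : Matrix n n R}
    (hM : M ∈ doublyStochastic R n) :
    ∃ σ : Equiv.Perm n, ∑ p, c p (σ p) ≤ ∑ p, ∑ q, M p q * c p q := by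
  let f : Matrix n n R →ₗ[R] R := ∑ p, ∑ q, c p q • Matrix.entryLinearMap R R p q
  have hf : ∀ N : Matrix n n R, f N = ∑ p, ∑ q, N p q * c p q := fun N => by
    simp [f, mul_comm]
  rw [← SetLike.mem_coe, doublyStochastic_eq_convexHull_permMatrix] at hM
  obtain ⟨_, ⟨σ, rfl⟩, hσ⟩ := (f.concaveOn convex_univ).exists_le_of_mem_convexHull
    (Set.subset_univ _) hM
  refine ⟨σ, le_of_eq_of_le ?_ ((hf _).symm.trans_le (hσ.trans (hf M).le))⟩
  simp [Equiv.Perm.permMatrix, PEquiv.toMatrix_apply]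

section IntegralTransport
variable {ι κ : Type*} [Fintype ι] [Fintype κ] {μ : ι → ℕ} {ν : κ → ℕ}

theorem sum_sigma_fin_fst {R : Type*} [NonAssocSemiring R] (g : ι → R) :
    ∑ p : Σ i, Fin (μ i), g p.1 = ∑ i, (μ i : R) * g i := by
  simp [Fintype.sum_sigma]

theorem Equiv.sum_sigma_fin_fst {R : Type*} [NonAssocSemiring R] {P : Type*} [Fintype P]
    (e : P ≃ Σ j, Fin (ν j)) (g : κ → R) :
    ∑ p, g (e p).1 = ∑ j, (ν j : R) * g j := by
  rw [e.sum_comp (fun q => g q.1), _root_.sum_sigma_fin_fst]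

noncomputable def blowupMatrix (e : (Σ i, Fin (μ i)) ≃ Σ j, Fin (ν j)) (A : ι → κ → ℝ) :
    Matrix (Σ i, Fin (μ i)) (Σ i, Fin (μ i)) ℝ :=
  fun p q => A p.1 (e q).1 / (μ p.1 * ν (e q).1)

section Marginals
variable {A : ι → κ → ℝ}

theorem mul_mul_div_eq_of_marginals (hA : ∀ i j, 0 ≤ A i j)
    (hrow : ∀ i, ∑ j, A i j = μ i) (hcol : ∀ j, ∑ i, A i j = ν j) (i : ι) (j : κ) :
    (μ i : ℝ) * ν j * (A i j / (μ i * ν j)) = A i j := by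
  rcases eq_or_ne ((μ i : ℝ) * ν j) 0 with h | h
  · have : A i j = 0 := by
      rcases mul_eq_zero.mp h with h | h
      · exact (sum_eq_zero_iff_of_nonneg fun j _ => hA i j).mp ((hrow i).trans h) j (mem_univ j)
      · exact (sum_eq_zero_iff_of_nonneg fun i _ => hA i j).mp ((hcol j).trans h) i (mem_univ i)
    simp [this]
  · exact mul_div_cancel₀ _ h

theorem sum_blowupMatrix_mul (hA : ∀ i j, 0 ≤ A i j)
    (hrow : ∀ i, ∑ j, A i j = μ i) (hcol : ∀ j, ∑ i, A i j = ν j)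
    (e : (Σ i, Fin (μ i)) ≃ Σ j, Fin (ν j)) (c : ι → κ → ℝ) :
    ∑ p, ∑ q, blowupMatrix e A p q * c p.1 (e q).1 = ∑ i, ∑ j, A i j * c i j := by
  calc ∑ p, ∑ q, blowupMatrix e A p q * c p.1 (e q).1
      = ∑ p : Σ i, Fin (μ i), ∑ j, (ν j : ℝ) * (A p.1 j / (μ p.1 * ν j) * c p.1 j) :=
        sum_congr rfl fun p _ => e.sum_sigma_fin_fst fun j => A p.1 j / (μ p.1 * ν j) * c p.1 j
    _ = ∑ i, (μ i : ℝ) * ∑ j, (ν j : ℝ) * (A i j / (μ i * ν j) * c i j) :=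
        sum_sigma_fin_fst fun i => ∑ j, (ν j : ℝ) * (A i j / (μ i * ν j) * c i j)
    _ = ∑ i, ∑ j, A i j * c i j := by
        refine sum_congr rfl fun i _ => ?_
        rw [mul_sum]
        exact sum_congr rfl fun j _ => by
          linear_combination c i j * mul_mul_div_eq_of_marginals hA hrow hcol i j

theorem blowupMatrix_mem_doublyStochastic [DecidableEq ι] (hA : ∀ i j, 0 ≤ A i j)
    (hrow : ∀ i, ∑ j, A i j = μ i) (hcol : ∀ j, ∑ i, A i j = ν j)
    (e : (Σ i, Fin (μ i)) ≃ Σ j, Fin (ν j)) :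
    blowupMatrix e A ∈ doublyStochastic ℝ (Σ i, Fin (μ i)) := by
  refine mem_doublyStochastic_iff_sum.mpr ⟨fun p q => div_nonneg (hA _ _) (by positivity),
    fun p => ?_, fun q => ?_⟩
  · have hμ : (μ p.1 : ℝ) ≠ 0 := Nat.cast_ne_zero.mpr p.2.pos.ne'
    rw [← mul_right_inj' hμ, mul_one]
    unfold blowupMatrix
    rw [e.sum_sigma_fin_fst fun j => A p.1 j / (μ p.1 * ν j), mul_sum]
    refine (sum_congr rfl fun j _ => ?_).trans (hrow p.1)
    linear_combination mul_mul_div_eq_of_marginals hA hrow hcol p.1 j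
  · have hν : (ν (e q).1 : ℝ) ≠ 0 := Nat.cast_ne_zero.mpr (e q).2.pos.ne'
    rw [← mul_right_inj' hν, mul_one]
    unfold blowupMatrix
    rw [sum_sigma_fin_fst fun i => A i (e q).1 / (μ i * ν (e q).1), mul_sum]
    refine (sum_congr rfl fun i _ => ?_).trans (hcol (e q).1)
    linear_combination mul_mul_div_eq_of_marginals hA hrow hcol i (e q).1

end Marginals

section Plan
variable [DecidableEq ι] [DecidableEq κ]

def equivPlan (τ : (Σ i, Fin (μ i)) ≃ Σ j, Fin (ν j)) (i : ι) (j : κ) : ℕ :=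
  #{p | p.1 = i ∧ (τ p).1 = j}

theorem sum_equivPlan_mul {R : Type*} [NonAssocSemiring R]
    (τ : (Σ i, Fin (μ i)) ≃ Σ j, Fin (ν j)) (g : ι → κ → R) :
    ∑ i, ∑ j, (equivPlan τ i j : R) * g i j = ∑ p, g p.1 (τ p).1 := by
  simp only [equivPlan, natCast_card_filter, sum_mul, ite_mul, one_mul, zero_mul, ite_and]
  refine (Finset.sum_congr rfl fun i _ => Finset.sum_comm).trans ?_
  rw [Finset.sum_comm]
  simp

theorem sum_equivPlan_right (τ : (Σ i, Fin (μ i)) ≃ Σ j, Fin (ν j)) (i : ι) :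
    ∑ j, equivPlan τ i j = μ i := by
  have h := sum_equivPlan_mul (R := ℕ) τ fun i' _ => if i' = i then 1 else 0
  rw [sum_sigma_fin_fst (fun i' => if i' = i then 1 else 0)] at h
  simpa using h

theorem sum_equivPlan_left (τ : (Σ i, Fin (μ i)) ≃ Σ j, Fin (ν j)) (j : κ) :
    ∑ i, equivPlan τ i j = ν j := by
  have h := sum_equivPlan_mul (R := ℕ) τ fun _ j' => if j' = j then 1 else 0
  rw [τ.sum_sigma_fin_fst (fun j' => if j' = j then 1 else 0)] at h
  simpa using h

end Plan

theorem exists_optimal_natPlan (c : ι → κ → ℝ) (h : ∑ i, μ i = ∑ j, ν j) :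
    ∃ B : ι → κ → ℕ, (∀ i, ∑ j, B i j = μ i) ∧ (∀ j, ∑ i, B i j = ν j) ∧
      ∀ A : ι → κ → ℝ, (∀ i j, 0 ≤ A i j) → (∀ i, ∑ j, A i j = μ i) →
        (∀ j, ∑ i, A i j = ν j) → ∑ i, ∑ j, (B i j : ℝ) * c i j ≤ ∑ i, ∑ j, A i j * c i j := by
  classical
  let e : (Σ i, Fin (μ i)) ≃ Σ j, Fin (ν j) := Fintype.equivOfCardEq (by simp [h])
  obtain ⟨σ, -, hσ⟩ := exists_min_image univ
    (fun σ : Equiv.Perm (Σ i, Fin (μ i)) => ∑ p, c p.1 (e (σ p)).1) univ_nonempty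
  refine ⟨equivPlan (σ.trans e), sum_equivPlan_right _, sum_equivPlan_left _,
    fun A hA hrow hcol => ?_⟩
  obtain ⟨σ', hσ'⟩ := exists_perm_sum_le_of_mem_doublyStochastic (fun p q => c p.1 (e q).1)
    (blowupMatrix_mem_doublyStochastic hA hrow hcol e)
  calc ∑ i, ∑ j, (equivPlan (σ.trans e) i j : ℝ) * c i j = ∑ p, c p.1 (e (σ p)).1 :=
        sum_equivPlan_mul _ _
    _ ≤ ∑ p, c p.1 (e (σ' p)).1 := hσ σ' (mem_univ _)
    _ ≤ _ := hσ'
    _ = _ := sum_blowupMatrix_mul hA hrow hcol e c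

end IntegralTransport

section Transport

theorem finsum_eq_sum_subtype {M : Type*} [AddCommMonoid M] {s : Finset V} {f : V → M}
    (hf : ∀ u, f u ≠ 0 → u ∈ s) :
    ∑ᶠ u, f u = ∑ i : s, f i := by
  rw [finsum_eq_sum_of_support_subset f fun u hu => hf u hu, sum_coe_sort]

theorem finsum_prod_eq_sum_subtype {M : Type*} [AddCommMonoid M] {s : Finset V} {f : V → V → M}
    (hf : ∀ u v, f u v ≠ 0 → u ∈ s ∧ v ∈ s) :
    ∑ᶠ p : V × V, f p.1 p.2 = ∑ i : s, ∑ j : s, f i j := by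
  rw [finsum_eq_sum_of_support_subset (s := s ×ˢ s) _ fun p hp => mem_product.mpr (hf _ _ hp),
    sum_product, ← sum_coe_sort]
  exact sum_congr rfl fun i _ => (sum_coe_sort s _).symm

open Classical in
noncomputable def extendByZero {M : Type*} [Zero M] (s : Finset V) (B : s → s → M) (u v : V) : M :=
  if h : u ∈ s ∧ v ∈ s then B ⟨u, h.1⟩ ⟨v, h.2⟩ else 0

@[simp]
theorem extendByZero_coe {M : Type*} [Zero M] {s : Finset V} (B : s → s → M) (i j : s) :
    extendByZero s B i j = B i j :=
  dif_pos ⟨i.2, j.2⟩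

theorem mem_of_extendByZero_ne_zero {M : Type*} [Zero M] {s : Finset V} {B : s → s → M} {u v : V}
    (h : extendByZero s B u v ≠ 0) : u ∈ s ∧ v ∈ s := by
  by_contra hn
  exact h (dif_neg hn)

variable {m₁ m₂ : V → ℝ} {A : V → V → ℝ}

theorem IsCoupling.apply_eq_zero_of_left (hA : IsCoupling m₁ m₂ A) {u : V} (hu : m₁ u = 0)
    (v : V) : A u v = 0 := by
  have hle : A u v ≤ m₁ u := hA.2.2.1 u ▸
    single_le_finsum v (hA.1.preimage (Prod.mk_right_injective u).injOn) fun w => (hA.2.1 u w).1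
  exact le_antisymm (hu ▸ hle) (hA.2.1 u v).1

theorem IsCoupling.apply_eq_zero_of_right (hA : IsCoupling m₁ m₂ A) {v : V} (hv : m₂ v = 0)
    (u : V) : A u v = 0 := by
  have hle : A u v ≤ m₂ v := hA.2.2.2 v ▸
    single_le_finsum u (hA.1.preimage (Prod.mk_left_injective v).injOn) fun w => (hA.2.1 w v).1
  exact le_antisymm (hv ▸ hle) (hA.2.1 u v).1

theorem IsCoupling.mem_of_apply_ne_zero {s : Finset V} (hA : IsCoupling m₁ m₂ A)
    (h₁ : ∀ u ∉ s, m₁ u = 0) (h₂ : ∀ v ∉ s, m₂ v = 0) {u v : V} (h : A u v ≠ 0) :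
    u ∈ s ∧ v ∈ s :=
  ⟨by_contra fun hu => h (hA.apply_eq_zero_of_left (h₁ u hu) v),
    by_contra fun hv => h (hA.apply_eq_zero_of_right (h₂ v hv) u)⟩

variable (G : SimpleGraph V) {s : Finset V} {D : ℕ} {μ ν : V → ℕ}

theorem natPlan_cost_le_of_isCoupling {B : s → s → ℕ}
    (hB : ∀ A : s → s → ℝ, (∀ i j, 0 ≤ A i j) → (∀ i, ∑ j, A i j = μ i) →
        (∀ j, ∑ i, A i j = ν j) → ∑ i, ∑ j, (B i j : ℝ) * G.dist i j ≤ ∑ i, ∑ j, A i j * G.dist i j)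
    (hD : 0 < D) (hμs : ∀ u ∉ s, μ u = 0) (hνs : ∀ v ∉ s, ν v = 0)
    (hA : IsCoupling (fun u => (μ u : ℝ) / D) (fun v => (ν v : ℝ) / D) A) :
    (∑ i, ∑ j, B i j * G.dist i j : ℕ) / (D : ℝ) ≤ ∑ᶠ p : V × V, A p.1 p.2 * G.dist p.1 p.2 := by
  have hsupp : ∀ u v, A u v ≠ 0 → u ∈ s ∧ v ∈ s := fun u v =>
    hA.mem_of_apply_ne_zero (by simp +contextual [hμs]) (by simp +contextual [hνs])
  have hD' : (0 : ℝ) < D := by exact_mod_cast hD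
  rw [finsum_prod_eq_sum_subtype (f := fun u v => A u v * G.dist u v)
    fun u v h => hsupp u v (left_ne_zero_of_mul h), div_le_iff₀ hD', sum_mul]
  push_cast
  refine (hB (fun i j => D * A i j) (fun i j => mul_nonneg hD'.le (hA.2.1 i j).1)
    (fun i => ?_) (fun j => ?_)).trans_eq
    (sum_congr rfl fun i _ => by rw [sum_mul]; exact sum_congr rfl fun j _ => by ring)
  · rw [← mul_sum, ← finsum_eq_sum_subtype fun v h => (hsupp i v h).2, hA.2.2.1]
    field_simp
  · rw [← mul_sum, ← finsum_eq_sum_subtype fun u h => (hsupp u j h).1, hA.2.2.2]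
    field_simp

theorem isCoupling_extendByZero_natPlan (hD : 0 < D) (hμs : ∀ u ∉ s, μ u = 0)
    (hνs : ∀ v ∉ s, ν v = 0) (hμ : ∑ u ∈ s, μ u = D) {B : s → s → ℕ}
    (hrow : ∀ i, ∑ j, B i j = μ i) (hcol : ∀ j, ∑ i, B i j = ν j) :
    IsCoupling (fun u => (μ u : ℝ) / D) (fun v => (ν v : ℝ) / D)
      (extendByZero s fun i j => (B i j : ℝ) / D) := by
  have hD' : (0 : ℝ) < D := by exact_mod_cast hD
  refine ⟨(s ×ˢ s).finite_toSet.subset fun p hp => mem_product.mpr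
      (mem_of_extendByZero_ne_zero hp), fun u v => ?_, fun u => ?_, fun v => ?_⟩
  · unfold extendByZero
    split_ifs with h
    · refine ⟨by positivity, (div_le_one hD').mpr ?_⟩
      have hB : B ⟨u, h.1⟩ ⟨v, h.2⟩ ≤ μ u :=
        hrow ⟨u, h.1⟩ ▸ single_le_sum (fun _ _ => Nat.zero_le _) (mem_univ _)
      have hμu : μ u ≤ D := hμ ▸ single_le_sum (fun _ _ => Nat.zero_le _) h.1
      exact_mod_cast hB.trans hμu
    · simp
  · rw [finsum_eq_sum_subtype fun v h => (mem_of_extendByZero_ne_zero h).2]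
    by_cases hu : u ∈ s
    · lift u to s using hu
      simp only [extendByZero_coe, ← sum_div, ← Nat.cast_sum, hrow]
    · simp [extendByZero, hu, hμs u hu]
  · rw [finsum_eq_sum_subtype fun u h => (mem_of_extendByZero_ne_zero h).1]
    by_cases hv : v ∈ s
    · lift v to s using hv
      simp only [extendByZero_coe, ← sum_div, ← Nat.cast_sum, hcol]
    · simp [extendByZero, hv, hνs v hv]

theorem exists_transportDist_eq_natCast_div (hD : 0 < D) (hμs : ∀ u ∉ s, μ u = 0)
    (hνs : ∀ v ∉ s, ν v = 0) (hμ : ∑ u ∈ s, μ u = D) (hν : ∑ v ∈ s, ν v = D) :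
    ∃ k : ℕ, transportDist G (fun u => (μ u : ℝ) / D) (fun v => (ν v : ℝ) / D) = k / D := by
  obtain ⟨B, hrow, hcol, hB⟩ := exists_optimal_natPlan (fun i j : s => (G.dist i j : ℝ))
    (μ := fun i : s => μ i) (ν := fun j : s => ν j) (by simp only [sum_coe_sort, hμ, hν])
  refine ⟨∑ i, ∑ j, B i j * G.dist i j, IsLeast.csInf_eq ⟨⟨_,
    isCoupling_extendByZero_natPlan hD hμs hνs hμ hrow hcol, ?_⟩, ?_⟩⟩
  · rw [finsum_prod_eq_sum_subtype
      (f := fun u v => extendByZero s (fun i j => (B i j : ℝ) / D) u v * G.dist u v)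
      fun u v h => mem_of_extendByZero_ne_zero (left_ne_zero_of_mul h)]
    simp only [extendByZero_coe]
    push_cast
    simp only [sum_div, div_mul_eq_mul_div]
  · rintro w ⟨A, hA, rfl⟩
    exact natPlan_cost_le_of_isCoupling G hB hD hμs hνs hA

end Transport

section LazyWalk
variable (G : SimpleGraph V) [G.LocallyFinite]

theorem exists_lazyWalk_eq_natCast_div {x : V} {L : ℕ} (hL : 0 < L) (hdvd : G.degree x ∣ L)
    (n : ℕ) {s : Finset V} (hx : x ∈ s) (hN : G.neighborFinset x ⊆ s) :
    ∃ μ : V → ℕ, (∀ u ∉ s, μ u = 0) ∧ ∑ u ∈ s, μ u = (n + 1) * L ∧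
      lazyWalk G (n / (n + 1)) x = fun u => (μ u : ℝ) / ((n + 1) * L : ℕ) := by
  classical
  have hdeg : (G.degree x : ℝ) ≠ 0 := by
    exact_mod_cast (Nat.pos_of_dvd_of_pos hdvd hL).ne'
  refine ⟨fun u => (if u = x then n * L else 0) + (if G.Adj x u then L / G.degree x else 0),
    fun u hu => ?_, ?_, funext fun u => ?_⟩
  · have hadj : ¬ G.Adj x u := fun h => hu (hN ((G.mem_neighborFinset x u).mpr h))
    simp [ne_of_mem_of_not_mem hx hu |>.symm, hadj]
  · have hfilter : s.filter (G.Adj x) = G.neighborFinset x := by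
      ext u
      simpa using fun h => hN ((G.mem_neighborFinset x u).mpr h)
    rw [sum_add_distrib, sum_ite_eq' s x, if_pos hx, ← sum_filter, hfilter, sum_const,
      G.card_neighborFinset_eq_degree, smul_eq_mul, Nat.mul_div_cancel' hdvd]
    ring
  · have hn : (n + 1 : ℝ) ≠ 0 := by positivity
    have hL' : (L : ℝ) ≠ 0 := by exact_mod_cast hL.ne'
    by_cases hux : u = x
    · subst hux
      simp only [lazyWalk, if_true, G.irrefl, if_false, add_zero]
      push_cast
      field_simp
    · by_cases hadj : G.Adj x u
      · simp only [lazyWalk, hux, hadj, if_true, if_false, zero_add]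
        push_cast [Nat.cast_div hdvd hdeg]
        field_simp
        ring
      · simp [lazyWalk, hux, hadj]

theorem exists_alphaRicci_div_eq_intCast_div {x y : V} (hxy : G.Adj x y) (n : ℕ) :
    ∃ m : ℤ, alphaRicci G (n / (n + 1)) x y / (1 - n / (n + 1)) =
      m / Nat.lcm (G.degree x) (G.degree y) := by
  classical
  set L := Nat.lcm (G.degree x) (G.degree y)
  have hL : 0 < L := Nat.lcm_pos ((G.degree_pos_iff_exists_adj x).mpr ⟨y, hxy⟩)
    ((G.degree_pos_iff_exists_adj y).mpr ⟨x, hxy.symm⟩)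
  set s := insert x (G.neighborFinset x) ∪ insert y (G.neighborFinset y)
  obtain ⟨μ, hμs, hμ, hμx⟩ := exists_lazyWalk_eq_natCast_div G hL (Nat.dvd_lcm_left _ _) n
    (s := s) (by simp [s]) (by intro u; simp +contextual [s])
  obtain ⟨ν, hνs, hν, hνy⟩ := exists_lazyWalk_eq_natCast_div G hL (Nat.dvd_lcm_right _ _) n
    (s := s) (by simp [s]) (by intro u; simp +contextual [s])
  obtain ⟨k, hk⟩ := exists_transportDist_eq_natCast_div G (by positivity) hμs hνs hμ hν
  refine ⟨(n + 1) * L - k, ?_⟩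
  have hn : (n + 1 : ℝ) ≠ 0 := by positivity
  have hL' : (L : ℝ) ≠ 0 := by exact_mod_cast hL.ne'
  rw [alphaRicci, hμx, hνy, hk, SimpleGraph.dist_eq_one_iff_adj.mpr hxy]
  push_cast
  field_simp
  ring

end LazyWalk

theorem one_div_le_of_tendsto_of_eq_intCast_div {ι : Type*} {l : Filter ι} [l.NeBot]
    {f : ι → ℝ} {κ : ℝ} {L : ℕ} (hL : 0 < L) (hf : Tendsto f l (nhds κ)) (hκ : 0 < κ)
    (hint : ∀ i, ∃ m : ℤ, f i = m / L) : 1 / (L : ℝ) ≤ κ := by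
  have hL' : (0 : ℝ) < L := by exact_mod_cast hL
  refine ge_of_tendsto hf ((hf.eventually (eventually_gt_nhds hκ)).mono fun i hi => ?_)
  obtain ⟨m, hm⟩ := hint i
  rw [hm] at hi ⊢
  have hm : (0 : ℤ) < m := by exact_mod_cast (div_pos_iff_of_pos_right hL').mp hi
  exact div_le_div_of_nonneg_right (by exact_mod_cast hm) hL'.le

theorem tendsto_natCast_div_add_one_nhdsLT :
    Tendsto (fun n : ℕ => (n : ℝ) / (n + 1)) atTop (nhdsWithin 1 (Iio 1)) :=
  tendsto_nhdsWithin_of_tendsto_nhds_of_eventually_within _ (tendsto_natCast_div_add_atTop 1)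
    (Eventually.of_forall fun n => (div_lt_one (n.cast_add_one_pos (α := ℝ))).mpr (lt_add_one _))

theorem lcm_le_mul_pred {a b Δ : ℕ} (ha : 0 < a) (hb : 0 < b) (haΔ : a ≤ Δ) (hbΔ : b ≤ Δ)
    (hΔ : 2 ≤ Δ) : Nat.lcm a b ≤ Δ * (Δ - 1) := by
  rcases lt_trichotomy a b with hab | rfl | hab
  · calc Nat.lcm a b ≤ a * b := Nat.le_of_dvd (by positivity) (Nat.lcm_dvd_mul a b)
      _ ≤ (Δ - 1) * Δ := Nat.mul_le_mul (by omega) hbΔ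
      _ = Δ * (Δ - 1) := Nat.mul_comm _ _
  · rw [Nat.lcm_self]
    exact haΔ.trans (Nat.le_mul_of_pos_right Δ (by omega))
  · calc Nat.lcm a b ≤ a * b := Nat.le_of_dvd (by positivity) (Nat.lcm_dvd_mul a b)
      _ ≤ Δ * (Δ - 1) := Nat.mul_le_mul haΔ (by omega)

theorem one_div_mul_sub_one_le_one_div_lcm {a b Δ : ℕ} (ha : 0 < a) (hb : 0 < b) (haΔ : a ≤ Δ)
    (hbΔ : b ≤ Δ) : 1 / ((Δ : ℝ) * (Δ - 1)) ≤ 1 / Nat.lcm a b := by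
  have hL : (0 : ℝ) < Nat.lcm a b := by exact_mod_cast Nat.lcm_pos ha hb
  rcases le_or_gt Δ 1 with hΔ | hΔ
  · have hΔ' : (Δ : ℝ) * (Δ - 1) ≤ 0 :=
      mul_nonpos_of_nonneg_of_nonpos (Nat.cast_nonneg Δ) (by simpa using hΔ)
    exact (one_div_nonpos.mpr hΔ').trans (one_div_pos.mpr hL).le
  · refine one_div_le_one_div_of_le hL ?_
    rw [← Nat.cast_pred (by omega), ← Nat.cast_mul]
    exact_mod_cast lcm_le_mul_pred ha hb haΔ hbΔ hΔ

theorem curvature_lower_bound_max_degree_general (G : SimpleGraph V) [G.LocallyFinite]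
    (hpos : PositivelyCurved G)
    (Δ : ℕ) (hub : ∀ u : V, G.degree u ≤ Δ) :
    ∀ x y : V, G.Adj x y → ∀ κ : ℝ, HasLLYCurv G x y κ →
      1 / ((Δ : ℝ) * ((Δ : ℝ) - 1)) ≤ κ := by
  intro x y hxy κ hκ
  obtain ⟨κ', hκ'pos, hκ'⟩ := hpos hxy
  obtain rfl : κ = κ' := tendsto_nhds_unique hκ hκ'
  have hdx : 0 < G.degree x := (G.degree_pos_iff_exists_adj x).mpr ⟨y, hxy⟩
  have hdy : 0 < G.degree y := (G.degree_pos_iff_exists_adj y).mpr ⟨x, hxy.symm⟩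
  calc 1 / ((Δ : ℝ) * ((Δ : ℝ) - 1)) ≤ 1 / Nat.lcm (G.degree x) (G.degree y) :=
        one_div_mul_sub_one_le_one_div_lcm hdx hdy (hub x) (hub y)
    _ ≤ κ := one_div_le_of_tendsto_of_eq_intCast_div (Nat.lcm_pos hdx hdy)
        (hκ.comp tendsto_natCast_div_add_one_nhdsLT) hκ'pos
        (exists_alphaRicci_div_eq_intCast_div G hxy)

/-- Lemma 8: a simple connected positively curved graph with maximum degree `Δ` has
Lin–Lu–Yau Ricci curvature at least `1/(Δ(Δ-1))` on every edge. -/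
theorem curvature_lower_bound_max_degree (G : SimpleGraph V) [G.LocallyFinite]
    (hconn : G.Connected) (hpos : PositivelyCurved G)
    (Δ : ℕ) (hub : ∀ u : V, G.degree u ≤ Δ) (hattained : ∃ u : V, G.degree u = Δ) :
    ∀ x y : V, G.Adj x y → ∀ κ : ℝ, HasLLYCurv G x y κ →
      1 / ((Δ : ℝ) * ((Δ : ℝ) - 1)) ≤ κ :=
  curvature_lower_bound_max_degree_general G hpos Δ hub
end

section
/- (Curvature via the Laplacian) Let G = (V,E) be a simple connected graph and let x ≠ y be vertices of G. Then κ_LLY(x,y) = inf { ∇_{xy} Δf : f is 1-Lipschitz with respect to the graph distance and ∇_{yx} f = 1 }, where ∇_{xy} f = (f(x) − f(y))/d(x,y) and Δf(x) = (1/deg(x)) Σ_{v∈Γ(x)} (f(v) − f(x)). -/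
/-!
By Kantorovich duality, `W(m_x^α, m_y^α)` is the supremum over 1-Lipschitz `φ` of
`∑ (m_x^α - m_y^α) φ = φ x - φ y + (1 - α) (Δφ x - Δφ y)`. The inequality `≥` is immediate. For
`≤`, if every plan with the given marginals costs more than `c`, Hahn–Banach separates the compact
convex set of (marginals, cost) of plans from the target set, and the separating functional
yields potentials whose c-transform is a 1-Lipschitz `φ` beating `c`.

Weak duality applied to `-f` gives `κ_α/(1-α) ≤ ∇_{xy}Δf` for every admissible `f`. Conversely,
lowering a 1-Lipschitz `φ` to `min φ (φ x - d(x,y) + d(y,·))` makes it admissible up to sign while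
moving `Δφ x` and `Δφ y` by at most the gap `g = d(x,y) - (φ x - φ y)`; the resulting error
`2(1-α)g` is absorbed by the loss `g` in `φ x - φ y` once `α ≥ 1/2`. So `κ_α/(1-α)` equals the
infimum for every `α ∈ [1/2, 1)`.
-/

open Filter Set

variable {V : Type*}

/-- The normalized combinatorial graph Laplacian `Δf(x) = (1/deg x) Σ_{u ~ x} (f u - f x)`. -/
noncomputable def graphLap (G : SimpleGraph V) [G.LocallyFinite] (f : V → ℝ) (w : V) : ℝ :=
  (∑ u ∈ G.neighborFinset w, (f u - f w)) / (G.degree w : ℝ)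

open Finset

section Kantorovich
variable {ι : Type*} [Fintype ι]

def marginalsCost (d : ι → ι → ℝ) : (ι × ι → ℝ) →ₗ[ℝ] (ι → ℝ) × (ι → ℝ) × ℝ where
  toFun A := (fun i => ∑ j, A (i, j), fun j => ∑ i, A (i, j), ∑ p, A p * d p.1 p.2)
  map_add' A B := by simp only [Pi.add_apply, sum_add_distrib, add_mul]; rfl
  map_smul' c A := by
    simp only [Pi.smul_apply, smul_eq_mul, mul_assoc, ← mul_sum]; rfl

lemma marginalsCost_single [DecidableEq ι] (d : ι → ι → ℝ) (i j : ι) :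
    marginalsCost d (Pi.single (i, j) 1) = (Pi.single i 1, Pi.single j 1, d i j) := by
  ext k <;> simp [marginalsCost, Pi.single_apply, Prod.ext_iff, ite_and, Fintype.sum_prod_type]

lemma LinearMap.apply_prod_eq_sum [DecidableEq ι] (f : (ι → ℝ) × (ι → ℝ) × ℝ →ₗ[ℝ] ℝ)
    (a b : ι → ℝ) (z : ℝ) :
    f (a, b, z) = ∑ i, a i * f (Pi.single i 1, 0, 0) + ∑ j, b j * f (0, Pi.single j 1, 0)
      + z * f (0, 0, 1) := by
  have : (a, b, z) = ∑ i, a i • ((Pi.single i 1 : ι → ℝ), (0 : ι → ℝ), (0:ℝ))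
      + ∑ j, b j • ((0 : ι → ℝ), (Pi.single j 1 : ι → ℝ), (0:ℝ)) + z • (0, 0, 1) := by
    ext <;> simp [Prod.fst_sum, Prod.snd_sum, Finset.sum_apply, Pi.single_apply]
  rw [this]
  simp only [map_add, map_sum, map_smul, smul_eq_mul]

lemma mul_mem_stdSimplex {μ ν : ι → ℝ} (hμ : μ ∈ stdSimplex ℝ ι) (hν : ν ∈ stdSimplex ℝ ι) :
    (fun p : ι × ι => μ p.1 * ν p.2) ∈ stdSimplex ℝ (ι × ι) :=
  ⟨fun p => mul_nonneg (hμ.1 _) (hν.1 _), by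
    simp [Fintype.sum_prod_type, ← mul_sum, hμ.2, hν.2]⟩

lemma marginalsCost_mul (d : ι → ι → ℝ) {μ ν : ι → ℝ} (hμ : μ ∈ stdSimplex ℝ ι)
    (hν : ν ∈ stdSimplex ℝ ι) :
    marginalsCost d (fun p : ι × ι => μ p.1 * ν p.2)
      = (μ, ν, ∑ p : ι × ι, μ p.1 * ν p.2 * d p.1 p.2) := by
  ext <;> simp [marginalsCost, ← mul_sum, ← sum_mul, hμ.2, hν.2]

lemma exists_potentials_of_forall_cost_gt (d : ι → ι → ℝ) {μ ν : ι → ℝ}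
    (hμ : μ ∈ stdSimplex ℝ ι) (hν : ν ∈ stdSimplex ℝ ι) {c : ℝ}
    (hcost : ∀ A ∈ stdSimplex ℝ (ι × ι), (∀ i, ∑ j, A (i, j) = μ i) →
      (∀ j, ∑ i, A (i, j) = ν j) → c < ∑ p, A p * d p.1 p.2) :
    ∃ (a b : ι → ℝ) (k : ℝ), (∀ i j, a i + b j < d i j + k) ∧
      c + k < ∑ i, μ i * a i + ∑ j, ν j * b j := by
  classical
  set L := marginalsCost d
  have hdisj : Disjoint (L '' stdSimplex ℝ (ι × ι)) ({μ} ×ˢ ({ν} ×ˢ Iic c)) := by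
    rw [Set.disjoint_left]
    rintro _ ⟨A, hA, rfl⟩ ⟨hrow, hcol, hle⟩
    exact (hcost A hA (congrFun hrow) (congrFun hcol)).not_ge hle
  obtain ⟨f, u, v, hfK, huv, hft⟩ := geometric_hahn_banach_compact_closed
    ((convex_stdSimplex ℝ _).linear_image L)
    ((isCompact_stdSimplex ℝ (ι × ι)).image L.continuous_of_finiteDimensional)
    ((convex_singleton μ).prod ((convex_singleton ν).prod (convex_Iic c)))
    (isClosed_singleton.prod (isClosed_singleton.prod isClosed_Iic)) hdisj
  set a : ι → ℝ := fun i => f (Pi.single i 1, 0, 0)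
  set b : ι → ℝ := fun j => f (0, Pi.single j 1, 0)
  set l : ℝ := f (0, 0, 1)
  have hf : ∀ p q z, f (p, q, z) = ∑ i, p i * a i + ∑ j, q j * b j + z * l :=
    LinearMap.apply_prod_eq_sum f.toLinearMap
  have hab : ∀ i j, a i + b j + d i j * l < u := fun i j => by
    simpa [L, marginalsCost_single, hf, Pi.single_apply] using
      hfK _ ⟨_, single_mem_stdSimplex ℝ (i, j), rfl⟩
  have hμν : ∀ z ≤ c, v < ∑ i, μ i * a i + ∑ j, ν j * b j + z * l := fun z hz => by
    simpa [hf] using hft (μ, ν, z) ⟨rfl, rfl, hz⟩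
  set D := ∑ p : ι × ι, μ p.1 * ν p.2 * d p.1 p.2
  have hprod : ∑ i, μ i * a i + ∑ j, ν j * b j + D * l < u := by
    simpa [L, marginalsCost_mul d hμ hν, hf] using hfK _ ⟨_, mul_mem_stdSimplex hμ hν, rfl⟩
  -- the target set is unbounded below in the cost coordinate, which forces `l < 0`
  have hl : l < 0 := by
    by_contra! hl
    have := hμν (min c D - 1) (by linarith [min_le_left c D])
    nlinarith [mul_le_mul_of_nonneg_right (by linarith [min_le_right c D] : min c D - 1 ≤ D) hl]
  have hκ : 0 < -l := neg_pos.mpr hl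
  refine ⟨fun i => a i / -l, fun j => b j / -l, u / -l, fun i j => ?_, ?_⟩
  · rw [← add_div, div_lt_iff₀ hκ, add_mul, div_mul_cancel₀ _ hκ.ne']
    linarith [hab i j]
  · simp only [mul_div_assoc', ← sum_div]
    rw [← add_div, lt_div_iff₀ hκ, add_mul, div_mul_cancel₀ _ hκ.ne']
    linarith [hμν c le_rfl]

lemma exists_lipschitz_between (d : ι → ι → ℝ) (hd_self : ∀ i, d i i = 0)
    (hd_tri : ∀ i j k, d i k ≤ d i j + d j k) [Nonempty ι] {a b : ι → ℝ} {k : ℝ}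
    (h : ∀ i j, a i + b j < d i j + k) :
    ∃ φ : ι → ℝ, (∀ i j, φ i - φ j ≤ d i j) ∧ (∀ i, a i ≤ φ i) ∧ ∀ j, φ j ≤ k - b j := by
  refine ⟨fun i => univ.inf' univ_nonempty fun j => d i j - b j + k, fun i i' => ?_,
    fun i => (le_inf'_iff _ _).mpr fun j _ => by linarith [h i j], fun j => ?_⟩
  · obtain ⟨j, -, hj⟩ := exists_mem_eq_inf' univ_nonempty fun j => d i' j - b j + k
    have := inf'_le (fun j => d i j - b j + k) (mem_univ j)
    simp only at hj this ⊢
    linarith [hd_tri i i' j]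
  · have := inf'_le (fun j' => d j j' - b j' + k) (mem_univ j)
    simp only [hd_self] at this
    linarith

theorem exists_plan_cost_le_of_forall_lipschitz (d : ι → ι → ℝ) (hd_self : ∀ i, d i i = 0)
    (hd_tri : ∀ i j k, d i k ≤ d i j + d j k) {μ ν : ι → ℝ}
    (hμ : μ ∈ stdSimplex ℝ ι) (hν : ν ∈ stdSimplex ℝ ι) {c : ℝ}
    (h : ∀ φ : ι → ℝ, (∀ i j, φ i - φ j ≤ d i j) → ∑ i, (μ i - ν i) * φ i ≤ c) :
    ∃ A ∈ stdSimplex ℝ (ι × ι), (∀ i, ∑ j, A (i, j) = μ i) ∧ (∀ j, ∑ i, A (i, j) = ν j) ∧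
      ∑ p, A p * d p.1 p.2 ≤ c := by
  by_contra! hcost
  obtain ⟨a, b, k, hab, hgap⟩ := exists_potentials_of_forall_cost_gt d hμ hν hcost
  have : Nonempty ι := by
    by_contra hempty
    simpa [not_nonempty_iff.mp hempty] using hμ.2
  obtain ⟨φ, hφ, haφ, hφb⟩ := exists_lipschitz_between d hd_self hd_tri hab
  have hμφ : ∑ i, μ i * a i ≤ ∑ i, μ i * φ i :=
    sum_le_sum fun i _ => mul_le_mul_of_nonneg_left (haφ i) (hμ.1 i)
  have hνφ : ∑ j, ν j * φ j ≤ ∑ j, ν j * (k - b j) :=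
    sum_le_sum fun j _ => mul_le_mul_of_nonneg_left (hφb j) (hν.1 j)
  have hνk : ∑ j, ν j * (k - b j) = k - ∑ j, ν j * b j := by
    simp [mul_sub, ← sum_mul, hν.2]
  have := h φ hφ
  simp only [sub_mul, sum_sub_distrib] at this
  linarith

end Kantorovich

section Lipschitz

variable {G : SimpleGraph V}

lemma abs_sub_le_dist_of_forall (φ : V → ℝ) (hφ : ∀ u w, φ u - φ w ≤ G.dist u w) (u w : V) :
    |φ u - φ w| ≤ G.dist u w :=
  abs_sub_le_iff.mpr ⟨hφ u w, G.dist_comm (u := u) ▸ hφ w u⟩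

lemma abs_dist_sub_dist_le (hconn : G.Connected) (x u w : V) :
    |(G.dist x u : ℝ) - G.dist x w| ≤ G.dist u w := by
  refine abs_sub_le_dist_of_forall (fun v => (G.dist x v : ℝ)) (fun u w => ?_) u w
  have : G.dist x u ≤ G.dist x w + G.dist w u := hconn.dist_triangle
  rw [SimpleGraph.dist_comm (u := w)] at this
  linarith [(by exact_mod_cast this : (G.dist x u : ℝ) ≤ G.dist x w + G.dist u w)]

lemma exists_lipschitz_extension (hconn : G.Connected) {B : Finset V} [Nonempty B] (φ : B → ℝ)
    (hφ : ∀ u w : B, φ u - φ w ≤ G.dist u w) :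
    ∃ ψ : V → ℝ, (∀ u : B, ψ u = φ u) ∧ ∀ u w, |ψ u - ψ w| ≤ G.dist u w := by
  set ψ : V → ℝ := fun v => univ.inf' univ_nonempty fun u : B => φ u + G.dist u v
  refine ⟨ψ, fun u => le_antisymm ?_ ((le_inf'_iff _ _).mpr fun w _ => ?_),
    abs_sub_le_dist_of_forall ψ fun u w => ?_⟩
  · have := inf'_le (fun w : B => φ w + G.dist w u) (mem_univ u)
    rwa [SimpleGraph.dist_self, Nat.cast_zero, add_zero] at this
  · have := hφ u w
    rw [SimpleGraph.dist_comm] at this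
    linarith
  · obtain ⟨z, -, hz⟩ := exists_mem_eq_inf' univ_nonempty fun z : B => φ z + G.dist z w
    have hu := inf'_le (fun z : B => φ z + G.dist z u) (mem_univ z)
    have htri : (G.dist z u : ℝ) ≤ G.dist z w + G.dist u w := by
      rw [SimpleGraph.dist_comm (u := u)]; exact_mod_cast hconn.dist_triangle
    simp only [ψ] at hz hu ⊢
    linarith

lemma exists_lipschitz_realizing_dist (hconn : G.Connected) {φ : V → ℝ}
    (hφ : ∀ u w, |φ u - φ w| ≤ G.dist u w) (x y : V) :
    ∃ ψ : V → ℝ, (∀ u w, |ψ u - ψ w| ≤ G.dist u w) ∧ ψ x = φ x ∧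
      ψ y = φ x - G.dist x y ∧
      ∀ v, ψ v ≤ φ v ∧ φ v - (G.dist x y - (φ x - φ y)) ≤ ψ v := by
  refine ⟨fun v => min (φ v) (φ x - G.dist x y + G.dist y v), fun u w => ?_, ?_, ?_,
    fun v => ⟨min_le_left _ _, le_min (by linarith [(abs_le.mp (hφ x y)).2]) ?_⟩⟩
  · refine (abs_min_sub_min_le_max _ _ _ _).trans (max_le (hφ u w) ?_)
    rw [add_sub_add_left_eq_sub]
    exact abs_dist_sub_dist_le hconn y u w
  · simp [SimpleGraph.dist_comm (u := y)]
  · simp only [SimpleGraph.dist_self, Nat.cast_zero, add_zero]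
    exact min_eq_right (by linarith [(abs_le.mp (hφ x y)).2])
  · have := (abs_le.mp (hφ v y)).2
    rw [SimpleGraph.dist_comm] at this
    linarith

end Lipschitz

section Transport

def IsProbOn (B : Finset V) (m : V → ℝ) : Prop :=
  (∀ v, 0 ≤ m v) ∧ (∀ v ∉ B, m v = 0) ∧ ∑ v ∈ B, m v = 1

variable {G : SimpleGraph V}

lemma IsProbOn.le_one {B : Finset V} {m : V → ℝ} (h : IsProbOn B m) (v : V) : m v ≤ 1 := by
  by_cases hv : v ∈ B
  · rw [← h.2.2]; exact single_le_sum (fun w _ => h.1 w) hv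
  · rw [h.2.1 v hv]; exact zero_le_one

lemma IsProbOn.finsum_eq_one {B : Finset V} {m : V → ℝ} (h : IsProbOn B m) : ∑ᶠ v, m v = 1 := by
  rw [finsum_eq_sum_of_support_subset m (s := B) fun v hv => ?_, h.2.2]
  by_contra hvB
  exact hv (h.2.1 v hvB)

lemma IsProbOn.isCoupling_mul {B : Finset V} {m₁ m₂ : V → ℝ} (h₁ : IsProbOn B m₁)
    (h₂ : IsProbOn B m₂) : IsCoupling m₁ m₂ fun u w => m₁ u * m₂ w := by
  refine ⟨(B ×ˢ B).finite_toSet.subset fun p hp => ?_, fun u w =>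
    ⟨mul_nonneg (h₁.1 u) (h₂.1 w), mul_le_one₀ (h₁.le_one u) (h₂.1 w) (h₂.le_one w)⟩,
    fun u => by rw [← mul_finsum, h₂.finsum_eq_one, mul_one],
    fun w => by rw [← finsum_mul, h₁.finsum_eq_one, one_mul]⟩
  have hp : m₁ p.1 * m₂ p.2 ≠ 0 := hp
  simp only [Finset.coe_product, Set.mem_prod, Finset.mem_coe]
  exact ⟨by_contra fun h => hp (by rw [h₁.2.1 _ h, zero_mul]),
    by_contra fun h => hp (by rw [h₂.2.1 _ h, mul_zero])⟩

lemma IsCoupling.exists_finset_support {m₁ m₂ : V → ℝ} {A : V → V → ℝ} (hA : IsCoupling m₁ m₂ A)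
    (B : Finset V) : ∃ C : Finset V, B ⊆ C ∧ ∀ u w, A u w ≠ 0 → u ∈ C ∧ w ∈ C := by
  classical
  refine ⟨B ∪ hA.1.toFinset.image Prod.fst ∪ hA.1.toFinset.image Prod.snd,
    subset_union_left.trans subset_union_left, fun u w huw => ⟨?_, ?_⟩⟩ <;>
  simp only [Finset.mem_union, Finset.mem_image, Set.Finite.mem_toFinset, Function.mem_support,
    Prod.exists] <;>
  grind

lemma IsCoupling.sum_sub_mul_le_cost {m₁ m₂ : V → ℝ} {A : V → V → ℝ} (hA : IsCoupling m₁ m₂ A)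
    {B : Finset V} (hm₁ : ∀ v ∉ B, m₁ v = 0) (hm₂ : ∀ v ∉ B, m₂ v = 0) {φ : V → ℝ}
    (hφ : ∀ u w, φ u - φ w ≤ G.dist u w) :
    ∑ v ∈ B, (m₁ v - m₂ v) * φ v ≤ ∑ᶠ p : V × V, A p.1 p.2 * G.dist p.1 p.2 := by
  obtain ⟨C, hBC, hC⟩ := hA.exists_finset_support B
  have hrow : ∀ u, m₁ u = ∑ w ∈ C, A u w := fun u => by
    rw [← hA.2.2.1 u]; exact finsum_eq_sum_of_support_subset _ fun w hw => (hC u w hw).2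
  have hcol : ∀ w, m₂ w = ∑ u ∈ C, A u w := fun w => by
    rw [← hA.2.2.2 w]; exact finsum_eq_sum_of_support_subset _ fun u hu => (hC u w hu).1
  calc ∑ v ∈ B, (m₁ v - m₂ v) * φ v = ∑ v ∈ C, (m₁ v - m₂ v) * φ v :=
        sum_subset hBC fun v _ hv => by rw [hm₁ v hv, hm₂ v hv, sub_self, zero_mul]
    _ = ∑ u ∈ C, ∑ w ∈ C, A u w * (φ u - φ w) := by
        simp only [sub_mul, sum_sub_distrib, hrow, hcol, sum_mul, mul_sub]
        rw [sum_comm (s := C) (t := C) (f := fun w u => A u w * φ w)]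
    _ ≤ ∑ u ∈ C, ∑ w ∈ C, A u w * G.dist u w :=
        sum_le_sum fun u _ => sum_le_sum fun w _ =>
          mul_le_mul_of_nonneg_left (hφ u w) (hA.2.1 u w).1
    _ = ∑ᶠ p : V × V, A p.1 p.2 * G.dist p.1 p.2 := by
        rw [finsum_eq_sum_of_support_subset (s := C ×ˢ C), sum_product]
        intro p hp
        have := hC p.1 p.2 (left_ne_zero_of_mul hp)
        simpa using this

lemma exists_isCoupling_of_plan {B : Finset V} {m₁ m₂ : V → ℝ} (hm₁ : ∀ v ∉ B, m₁ v = 0)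
    (hm₂ : ∀ v ∉ B, m₂ v = 0) {A : B × B → ℝ} (hA : A ∈ stdSimplex ℝ (B × B))
    (hrow : ∀ i, ∑ j, A (i, j) = m₁ i) (hcol : ∀ j, ∑ i, A (i, j) = m₂ j) :
    ∃ A' : V → V → ℝ, IsCoupling m₁ m₂ A' ∧
      ∑ᶠ p : V × V, A' p.1 p.2 * G.dist p.1 p.2 = ∑ p, A p * G.dist p.1 p.2 := by
  classical
  set A' : V → V → ℝ := fun u w => if h : u ∈ B ∧ w ∈ B then A (⟨u, h.1⟩, ⟨w, h.2⟩) else 0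
  have hsupp : ∀ u w, A' u w ≠ 0 → u ∈ B ∧ w ∈ B := fun u w h => by
    by_contra hn; exact h (dif_neg hn)
  have hrow' : ∀ u, ∑ᶠ w, A' u w = m₁ u := fun u => by
    rw [finsum_eq_sum_of_support_subset (s := B) _ fun w hw => (hsupp u w hw).2]
    by_cases hu : u ∈ B
    · rw [← sum_coe_sort, ← hrow ⟨u, hu⟩]
      exact sum_congr rfl fun w _ => dif_pos ⟨hu, w.2⟩
    · rw [hm₁ u hu]; exact sum_eq_zero fun w _ => dif_neg fun h => hu h.1
  have hcol' : ∀ w, ∑ᶠ u, A' u w = m₂ w := fun w => by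
    rw [finsum_eq_sum_of_support_subset (s := B) _ fun u hu => (hsupp u w hu).1]
    by_cases hw : w ∈ B
    · rw [← sum_coe_sort, ← hcol ⟨w, hw⟩]
      exact sum_congr rfl fun u _ => dif_pos ⟨u.2, hw⟩
    · rw [hm₂ w hw]; exact sum_eq_zero fun u _ => dif_neg fun h => hw h.2
  have hbound : ∀ u w, 0 ≤ A' u w ∧ A' u w ≤ 1 := fun u w => by
    by_cases h : u ∈ B ∧ w ∈ B
    · simp only [A', dif_pos h]; exact mem_Icc_of_mem_stdSimplex hA _
    · simp [A', dif_neg h]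
  refine ⟨A', ⟨(B ×ˢ B).finite_toSet.subset fun p hp => ?_, hbound, hrow', hcol'⟩, ?_⟩
  · simpa using hsupp p.1 p.2 hp
  · rw [finsum_eq_sum_of_support_subset (s := B ×ˢ B), sum_product, Fintype.sum_prod_type,
      ← sum_coe_sort B]
    · refine sum_congr rfl fun u _ => ?_
      rw [← sum_coe_sort B]
      exact sum_congr rfl fun w _ => by simp only [A', dif_pos (And.intro u.2 w.2)]
    · intro p hp
      simpa using hsupp p.1 p.2 (left_ne_zero_of_mul hp)

lemma sum_sub_mul_le_transportDist {B : Finset V} {m₁ m₂ : V → ℝ} (h₁ : IsProbOn B m₁)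
    (h₂ : IsProbOn B m₂) {φ : V → ℝ} (hφ : ∀ u w, φ u - φ w ≤ G.dist u w) :
    ∑ v ∈ B, (m₁ v - m₂ v) * φ v ≤ transportDist G m₁ m₂ := by
  unfold transportDist
  refine le_csInf ⟨_, _, h₁.isCoupling_mul h₂, rfl⟩ ?_
  rintro _ ⟨A, hA, rfl⟩
  exact hA.sum_sub_mul_le_cost h₁.2.1 h₂.2.1 hφ

lemma transportDist_le_of_forall_lipschitz (hconn : G.Connected) {B : Finset V}
    {m₁ m₂ : V → ℝ} (h₁ : IsProbOn B m₁) (h₂ : IsProbOn B m₂) {c : ℝ}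
    (h : ∀ φ : V → ℝ, (∀ u w, |φ u - φ w| ≤ G.dist u w) → ∑ v ∈ B, (m₁ v - m₂ v) * φ v ≤ c) :
    transportDist G m₁ m₂ ≤ c := by
  have hB : Nonempty B := by
    obtain ⟨v, hv, -⟩ := exists_ne_zero_of_sum_ne_zero (h₁.2.2.trans_ne one_ne_zero)
    exact ⟨⟨v, hv⟩⟩
  have hprob : ∀ {m}, IsProbOn B m → (fun v : B => m v) ∈ stdSimplex ℝ B := fun hm =>
    ⟨fun v => hm.1 v, by rw [sum_coe_sort B]; exact hm.2.2⟩
  obtain ⟨A, hA, hrow, hcol, hcost⟩ := exists_plan_cost_le_of_forall_lipschitz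
    (fun u w : B => (G.dist u w : ℝ)) (fun u => by simp)
    (fun u v w => by exact_mod_cast hconn.dist_triangle) (hprob h₁) (hprob h₂) fun φ hφ => by
      obtain ⟨ψ, hψφ, hψ⟩ := exists_lipschitz_extension hconn φ hφ
      simpa [← sum_coe_sort B, hψφ] using h ψ hψ
  obtain ⟨A', hA', hcost'⟩ := exists_isCoupling_of_plan h₁.2.1 h₂.2.1 hA hrow hcol
  unfold transportDist
  refine (csInf_le ⟨0, ?_⟩ (Set.mem_ofPred.mpr ⟨A', hA', rfl⟩)).trans (hcost' ▸ hcost)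
  rintro _ ⟨A'', hA'', rfl⟩
  exact finsum_nonneg fun p => mul_nonneg (hA''.2.1 _ _).1 (Nat.cast_nonneg _)

end Transport

section LazyWalk

variable [DecidableEq V] {G : SimpleGraph V} [G.LocallyFinite]

lemma lazyWalk_eq_zero {α : ℝ} {x v : V} (hv : v ∉ insert x (G.neighborFinset x)) :
    lazyWalk G α x v = 0 := by
  rw [Finset.mem_insert, SimpleGraph.mem_neighborFinset, not_or] at hv
  simp [lazyWalk, hv.1, hv.2]

lemma sum_lazyWalk_mul {α : ℝ} {x : V} (hd : 0 < G.degree x) {B : Finset V}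
    (hB : insert x (G.neighborFinset x) ⊆ B) (φ : V → ℝ) :
    ∑ v ∈ B, lazyWalk G α x v * φ v = φ x + (1 - α) * graphLap G φ x := by
  rw [← sum_subset hB fun v _ hv => by rw [lazyWalk_eq_zero hv, zero_mul],
    sum_insert (G.notMem_neighborFinset_self x)]
  have hnbr : ∀ v ∈ G.neighborFinset x, lazyWalk G α x v * φ v
      = (1 - α) / G.degree x * φ v := fun v hv => by
    rw [SimpleGraph.mem_neighborFinset] at hv
    simp [lazyWalk, hv.ne', hv]
  have hd' : (G.degree x : ℝ) ≠ 0 := by positivity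
  rw [sum_congr rfl hnbr, ← mul_sum, graphLap, sum_sub_distrib, sum_const,
    SimpleGraph.card_neighborFinset_eq_degree, nsmul_eq_mul]
  simp only [lazyWalk, if_pos]
  field_simp
  ring

lemma isProbOn_lazyWalk {α : ℝ} (hα0 : 0 ≤ α) (hα1 : α ≤ 1) {x : V} (hd : 0 < G.degree x)
    {B : Finset V} (hB : insert x (G.neighborFinset x) ⊆ B) : IsProbOn B (lazyWalk G α x) := by
  refine ⟨fun v => ?_, fun v hv => lazyWalk_eq_zero fun h => hv (hB h), ?_⟩
  · unfold lazyWalk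
    split_ifs <;> first | exact hα0 | exact le_rfl | exact div_nonneg (by linarith) (by positivity)
  · simpa [graphLap] using sum_lazyWalk_mul (α := α) hd hB fun _ => 1

end LazyWalk

section Laplacian

variable {G : SimpleGraph V} [G.LocallyFinite]

lemma graphLap_neg (f : V → ℝ) (w : V) : graphLap G (-f) w = -graphLap G f w := by
  simp only [graphLap, Pi.neg_apply, neg_sub_neg, ← neg_div, ← sum_neg_distrib, neg_sub]

lemma graphLap_le_add {w : V} (hd : 0 < G.degree w) {f g : V → ℝ} {e : ℝ}
    (h : ∀ u, G.Adj w u → f u - f w ≤ g u - g w + e) :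
    graphLap G f w ≤ graphLap G g w + e := by
  have hd' : (0 : ℝ) < G.degree w := by exact_mod_cast hd
  rw [graphLap, graphLap, div_add' _ _ _ hd'.ne', div_le_div_iff_of_pos_right hd']
  calc ∑ u ∈ G.neighborFinset w, (f u - f w)
      ≤ ∑ u ∈ G.neighborFinset w, (g u - g w + e) :=
        sum_le_sum fun u hu => h u ((G.mem_neighborFinset w u).mp hu)
    _ = _ := by
        rw [sum_add_distrib, sum_const, SimpleGraph.card_neighborFinset_eq_degree, nsmul_eq_mul,
          mul_comm]

end Laplacian

section Curvature

variable {G : SimpleGraph V} [G.LocallyFinite]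

lemma degree_pos_of_connected (hconn : G.Connected) {x y : V} (hxy : x ≠ y) (v : V) :
    0 < G.degree v :=
  haveI : Nontrivial V := ⟨⟨x, y, hxy⟩⟩
  hconn.preconnected.degree_pos_of_nontrivial v

lemma sum_lazyWalk_sub_mul [DecidableEq V] {α : ℝ} {x y : V} (hdx : 0 < G.degree x)
    (hdy : 0 < G.degree y) (φ : V → ℝ) :
    ∑ v ∈ insert x (G.neighborFinset x) ∪ insert y (G.neighborFinset y),
      (lazyWalk G α x v - lazyWalk G α y v) * φ v
      = φ x - φ y + (1 - α) * (graphLap G φ x - graphLap G φ y) := by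
  simp only [sub_mul, sum_sub_distrib]
  rw [sum_lazyWalk_mul hdx subset_union_left, sum_lazyWalk_mul hdy subset_union_right]
  ring

lemma le_transportDist_lazyWalk (hconn : G.Connected) {x y : V} (hxy : x ≠ y) {α : ℝ}
    (hα0 : 0 ≤ α) (hα1 : α ≤ 1) {φ : V → ℝ} (hφ : ∀ u w, φ u - φ w ≤ G.dist u w) :
    φ x - φ y + (1 - α) * (graphLap G φ x - graphLap G φ y)
      ≤ transportDist G (lazyWalk G α x) (lazyWalk G α y) := by
  classical
  have hdx := degree_pos_of_connected hconn hxy x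
  have hdy := degree_pos_of_connected hconn hxy y
  rw [← sum_lazyWalk_sub_mul hdx hdy]
  exact sum_sub_mul_le_transportDist (isProbOn_lazyWalk hα0 hα1 hdx subset_union_left)
    (isProbOn_lazyWalk hα0 hα1 hdy subset_union_right) hφ

lemma transportDist_lazyWalk_le (hconn : G.Connected) {x y : V} (hxy : x ≠ y) {α : ℝ}
    (hα0 : 0 ≤ α) (hα1 : α ≤ 1) {c : ℝ}
    (h : ∀ φ : V → ℝ, (∀ u w, |φ u - φ w| ≤ G.dist u w) →
      φ x - φ y + (1 - α) * (graphLap G φ x - graphLap G φ y) ≤ c) :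
    transportDist G (lazyWalk G α x) (lazyWalk G α y) ≤ c := by
  classical
  have hdx := degree_pos_of_connected hconn hxy x
  have hdy := degree_pos_of_connected hconn hxy y
  refine transportDist_le_of_forall_lipschitz hconn
    (isProbOn_lazyWalk hα0 hα1 hdx subset_union_left)
    (isProbOn_lazyWalk hα0 hα1 hdy subset_union_right) fun φ hφ => ?_
  rw [sum_lazyWalk_sub_mul hdx hdy]
  exact h φ hφ

lemma alphaRicci_div_le (hconn : G.Connected) {x y : V} (hxy : x ≠ y) {α : ℝ} (hα0 : 0 ≤ α)
    (hα1 : α < 1) {f : V → ℝ} (hf : ∀ u w, |f u - f w| ≤ G.dist u w)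
    (hfxy : f y - f x = G.dist x y) :
    alphaRicci G α x y / (1 - α) ≤ (graphLap G f x - graphLap G f y) / G.dist x y := by
  have hn : (0 : ℝ) < G.dist x y := by exact_mod_cast hconn.pos_dist_of_ne hxy
  have hW := le_transportDist_lazyWalk hconn hxy hα0 hα1.le (φ := -f) fun u w => by
    simp only [Pi.neg_apply]; linarith [(abs_le.mp (hf u w)).1]
  simp only [graphLap_neg, Pi.neg_apply] at hW
  rw [alphaRicci, div_le_div_iff₀ (by linarith) hn, sub_mul, div_mul_cancel₀ _ hn.ne']
  linarith

lemma le_alphaRicci_div (hconn : G.Connected) {x y : V} (hxy : x ≠ y) {α : ℝ} (hα0 : 1 / 2 ≤ α)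
    (hα1 : α < 1) {s : ℝ}
    (hs : ∀ f : V → ℝ, (∀ u w, |f u - f w| ≤ G.dist u w) → f y - f x = G.dist x y →
      s ≤ (graphLap G f x - graphLap G f y) / G.dist x y) :
    s ≤ alphaRicci G α x y / (1 - α) := by
  have hn : (0 : ℝ) < G.dist x y := by exact_mod_cast hconn.pos_dist_of_ne hxy
  have hW : transportDist G (lazyWalk G α x) (lazyWalk G α y)
      ≤ G.dist x y - (1 - α) * G.dist x y * s := by
    refine transportDist_lazyWalk_le hconn hxy (by linarith) hα1.le fun φ hφ => ?_
    obtain ⟨ψ, hψ, hψx, hψy, hψφ⟩ := exists_lipschitz_realizing_dist hconn hφ x y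
    set g := (G.dist x y : ℝ) - (φ x - φ y)
    have hg : 0 ≤ g := by linarith [(abs_le.mp (hφ x y)).2]
    have hnegψ : ∀ u w, |(-ψ) u - (-ψ) w| ≤ G.dist u w := fun u w => by
      rw [Pi.neg_apply, Pi.neg_apply, neg_sub_neg, abs_sub_comm]; exact hψ u w
    have hsψ := hs (-ψ) hnegψ (by simp only [Pi.neg_apply, hψx, hψy]; ring)
    rw [graphLap_neg, graphLap_neg, le_div_iff₀ hn] at hsψ
    have hx : graphLap G φ x ≤ graphLap G ψ x + g :=
      graphLap_le_add (degree_pos_of_connected hconn hxy x) fun u _ => by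
        linarith [(hψφ u).2]
    have hy : graphLap G ψ y ≤ graphLap G φ y + g :=
      graphLap_le_add (degree_pos_of_connected hconn hxy y) fun u _ => by
        linarith [(hψφ u).1]
    have h1 : (1 - α) * (graphLap G φ x - graphLap G φ y)
        ≤ (1 - α) * (2 * g - G.dist x y * s) :=
      mul_le_mul_of_nonneg_left (by linarith) (by linarith)
    linarith [mul_nonneg hg (by linarith : 0 ≤ 2 * α - 1)]
  rw [le_div_iff₀ (by linarith), alphaRicci, le_sub_iff_add_le, ← le_sub_iff_add_le',
    div_le_iff₀ hn]
  linarith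

end Curvature

/-- Theorem 4 (curvature via the Laplacian): for distinct vertices `x ≠ y` of a simple
connected graph, `κ_LLY(x,y) = inf { ∇_{xy} Δf : f 1-Lipschitz, ∇_{yx} f = 1 }`,
where `∇_{xy} g = (g x - g y)/d(x,y)`. -/
theorem curvature_via_laplacian (G : SimpleGraph V) [G.LocallyFinite]
    (hconn : G.Connected) (x y : V) (hxy : x ≠ y) :
    HasLLYCurv G x y (sInf {r : ℝ | ∃ f : V → ℝ,
      (∀ u w : V, |f u - f w| ≤ (G.dist u w : ℝ)) ∧
      (f y - f x) / (G.dist y x : ℝ) = 1 ∧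
      r = (graphLap G f x - graphLap G f y) / (G.dist x y : ℝ)}) := by
  set S := {r : ℝ | ∃ f : V → ℝ, (∀ u w : V, |f u - f w| ≤ (G.dist u w : ℝ)) ∧
      (f y - f x) / (G.dist y x : ℝ) = 1 ∧
      r = (graphLap G f x - graphLap G f y) / (G.dist x y : ℝ)}
  have hn : (0 : ℝ) < G.dist x y := by exact_mod_cast hconn.pos_dist_of_ne hxy
  have hnorm : ∀ f : V → ℝ, (f y - f x) / (G.dist y x : ℝ) = 1 ↔ f y - f x = G.dist x y :=
    fun f => by rw [SimpleGraph.dist_comm, div_eq_one_iff_eq hn.ne']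
  have hle : ∀ α ∈ Ico (1 / 2 : ℝ) 1, ∀ r ∈ S, alphaRicci G α x y / (1 - α) ≤ r := by
    rintro α ⟨hα0, hα1⟩ _ ⟨f, hf, hfxy, rfl⟩
    exact alphaRicci_div_le hconn hxy (by linarith) hα1 hf ((hnorm f).mp hfxy)
  have hS : S.Nonempty := ⟨_, fun v => (G.dist x v : ℝ), abs_dist_sub_dist_le hconn x,
    (hnorm fun v => (G.dist x v : ℝ)).mpr (by simp), rfl⟩
  have hconst : ∀ α ∈ Ico (1 / 2 : ℝ) 1, alphaRicci G α x y / (1 - α) = sInf S :=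
    fun α hα => le_antisymm (le_csInf hS (hle α hα)) (le_alphaRicci_div hconn hxy hα.1 hα.2
      fun f hf hfxy => csInf_le ⟨_, hle _ ⟨le_rfl, by norm_num⟩⟩ ⟨f, hf, (hnorm f).mpr hfxy, rfl⟩)
  exact tendsto_const_nhds.congr' <| eventuallyEq_of_mem (Ioo_mem_nhdsLT (by norm_num))
    fun α hα => (hconst α ⟨hα.1.le, hα.2⟩).symm
end

section
/- Let G = (V,E) be a locally finite graph, let x and y be adjacent vertices, and let p ∈ [0,1]. Then there exists a 1-Lipschitz function φ:V→ℝ taking only integer values such that W(m_x^p, m_y^p) = Σ_{w∈V} φ(w)(m_x^p(w) − m_y^p(w)). -/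
open Filter Set

variable {V : Type*}

/-!
The transport problem between two probability distributions supported on a finite set `s` has an
optimal plan `A`, the plans forming a compact set. Moving mass `ε` around a cycle of pairs in the
support `R` of `A` keeps the marginals, so optimality makes `R` cyclically monotone. Rockafellar's
construction then gives the potential: `ψ v` is the largest gain of a duplicate-free chain of pairs
of `R` ending at `v`. It is `1`-Lipschitz, integer-valued because graph distances are, and satisfies
`ψ b = ψ a + d(a, b)` for `(a, b) ∈ R`; hence the cost of `A` equals `∑ w, -ψ w * (m₁ w - m₂ w)`.
-/

def Finset.nodupLists {α : Type*} [DecidableEq α] (R : Finset α) : Finset (List α) :=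
  R.powerset.biUnion fun t => (Multiset.lists t.val).toFinset

lemma Finset.mem_nodupLists {α : Type*} [DecidableEq α] {R : Finset α} {l : List α} :
    l ∈ R.nodupLists ↔ l.Nodup ∧ ∀ a ∈ l, a ∈ R := by
  simp only [Finset.nodupLists, Finset.mem_biUnion, Finset.mem_powerset, Multiset.mem_toFinset,
    Multiset.mem_lists_iff]
  constructor
  · rintro ⟨t, htR, ht⟩
    have hlt : (l : Multiset α) = t.val := ht.symm
    refine ⟨Multiset.coe_nodup.1 (hlt ▸ t.nodup), fun a ha => htR ?_⟩
    rw [← Finset.mem_val, ← hlt]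
    exact Multiset.mem_coe.2 ha
  · rintro ⟨hl, hlR⟩
    exact ⟨l.toFinset, fun a ha => hlR a (List.mem_toFinset.1 ha), by simp [hl.dedup]⟩

lemma List.sum_count_pair_eq_count_fst {α β : Type*} [DecidableEq α] [DecidableEq β]
    {L : List (α × β)} {t : Finset β} (hL : ∀ q ∈ L, q.2 ∈ t) (a : α) :
    ∑ b ∈ t, L.count (a, b) = (L.map Prod.fst).count a := by
  induction L with
  | nil => simp
  | cons q L ih =>
    obtain ⟨q₁, q₂⟩ := q
    have hq₂ : q₂ ∈ t := hL _ List.mem_cons_self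
    simp only [List.count_cons, List.map_cons, Finset.sum_add_distrib,
      ih fun q hq => hL q (List.mem_cons_of_mem _ hq), beq_iff_eq, Prod.mk.injEq, add_right_inj]
    split_ifs with h <;> simp [h, hq₂]

lemma List.sum_count_pair_eq_count_snd {α β : Type*} [DecidableEq α] [DecidableEq β]
    {L : List (α × β)} {t : Finset α} (hL : ∀ q ∈ L, q.1 ∈ t) (b : β) :
    ∑ a ∈ t, L.count (a, b) = (L.map Prod.snd).count b := by
  induction L with
  | nil => simp
  | cons q L ih =>
    obtain ⟨q₁, q₂⟩ := q
    have hq₁ : q₁ ∈ t := hL _ List.mem_cons_self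
    simp only [List.count_cons, List.map_cons, Finset.sum_add_distrib,
      ih fun q hq => hL q (List.mem_cons_of_mem _ hq), beq_iff_eq, Prod.mk.injEq, add_right_inj]
    split_ifs with h <;> simp [h, hq₁]

namespace SimpleGraph

variable (G : SimpleGraph V)

noncomputable def sumDist (L : List (V × V)) : ℕ := (L.map fun q => G.dist q.1 q.2).sum

@[simp] lemma sumDist_nil : G.sumDist [] = 0 := rfl

@[simp] lemma sumDist_cons (q : V × V) (L : List (V × V)) :
    G.sumDist (q :: L) = G.dist q.1 q.2 + G.sumDist L := rfl

/-- For a chain `C = [(a₁, b₁), …, (aₖ, bₖ)]` these are the pairs `(a₁, src), (a₂, b₁), …, (v, bₖ)`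
joining `src`, the pairs of `C` and `v`; so `chainGain src C v` is
`∑ d(aᵢ, bᵢ) - d(src, a₁) - ∑ d(bᵢ, aᵢ₊₁) - d(bₖ, v)`. -/
def chainLinks : V → List (V × V) → V → List (V × V)
  | src, [], v => [(v, src)]
  | src, q :: C, v => (q.1, src) :: chainLinks q.2 C v

@[simp] lemma chainLinks_nil (src v : V) : chainLinks src [] v = [(v, src)] := rfl

@[simp] lemma chainLinks_cons (src v : V) (q : V × V) (C : List (V × V)) :
    chainLinks src (q :: C) v = (q.1, src) :: chainLinks q.2 C v := rfl

lemma map_fst_chainLinks (src v : V) (C : List (V × V)) :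
    (chainLinks src C v).map Prod.fst = C.map Prod.fst ++ [v] := by
  induction C generalizing src <;> simp [*]

lemma map_snd_chainLinks (src v : V) (C : List (V × V)) :
    (chainLinks src C v).map Prod.snd = src :: C.map Prod.snd := by
  induction C generalizing src <;> simp [*]

lemma chainLinks_mem_product {t : Finset V} {src v : V} {C : List (V × V)} (hsrc : src ∈ t)
    (hv : v ∈ t) (hC : ∀ q ∈ C, q ∈ t ×ˢ t) : ∀ q ∈ chainLinks src C v, q ∈ t ×ˢ t := by
  induction C generalizing src with
  | nil => simp [hsrc, hv]
  | cons p C ih =>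
    have hp := Finset.mem_product.1 (hC p List.mem_cons_self)
    simp only [chainLinks_cons, List.mem_cons, forall_eq_or_imp]
    exact ⟨Finset.mem_product.2 ⟨hp.1, hsrc⟩, ih hp.2 fun q hq => hC q (List.mem_cons_of_mem _ hq)⟩

noncomputable def chainGain (src : V) (C : List (V × V)) (v : V) : ℤ :=
  G.sumDist C - G.sumDist (chainLinks src C v)

@[simp] lemma chainGain_nil (src v : V) : G.chainGain src [] v = -G.dist v src := by
  simp [chainGain]

@[simp] lemma chainGain_cons (src v : V) (q : V × V) (C : List (V × V)) :
    G.chainGain src (q :: C) v = G.dist q.1 q.2 - G.dist q.1 src + G.chainGain q.2 C v := by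
  simp only [chainGain, sumDist_cons, chainLinks_cons]
  push_cast
  ring

lemma chainGain_append_cons (src v : V) (P : List (V × V)) (q : V × V) (Q : List (V × V)) :
    G.chainGain src (P ++ q :: Q) v = G.chainGain src P q.1 + G.chainGain q.1 (q :: Q) v := by
  induction P generalizing src with
  | nil => simp; ring
  | cons p P ih => simp only [List.cons_append, chainGain_cons, ih]; ring

lemma chainGain_append_singleton (src : V) (P : List (V × V)) (q : V × V) :
    G.chainGain src (P ++ [q]) q.2 = G.chainGain src P q.1 + G.dist q.1 q.2 := by
  simp [chainGain_append_cons]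

lemma chainGain_cycle (a b : V) (Q : List (V × V)) :
    G.chainGain a ((a, b) :: Q) a = G.sumDist ((a, b) :: Q) - G.sumDist (chainLinks b Q a) := by
  simp [chainGain]

lemma chainGain_sub_dist_le {u v : V} (h : G.Reachable u v) (src : V) (C : List (V × V)) :
    G.chainGain src C u - G.dist u v ≤ G.chainGain src C v := by
  induction C generalizing src with
  | nil =>
    have := h.symm.dist_triangle_left src
    simp only [chainGain_nil, dist_comm (u := v) (v := u)] at *
    omega
  | cons q C ih => simp only [chainGain_cons]; linarith [ih q.2]

/-- Every cycle that goes from `a` to `b` by a pair of `R` and returns to `a` along a chain of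
pairs of `R` has nonpositive gain. -/
def IsCyclicallyMonotone (R : Finset (V × V)) : Prop :=
  ∀ q ∈ R, ∀ Q : List (V × V), (∀ p ∈ Q, p ∈ R) → G.chainGain q.1 (q :: Q) q.1 ≤ 0

variable [DecidableEq V]

noncomputable def chainPotential (R : Finset (V × V)) (src v : V) : ℤ :=
  R.nodupLists.sup' ⟨[], by simp [Finset.mem_nodupLists]⟩ fun C => G.chainGain src C v

variable {G} {R : Finset (V × V)} {src : V}

lemma chainGain_le_chainPotential {C : List (V × V)} (hC : C ∈ R.nodupLists) (v : V) :
    G.chainGain src C v ≤ G.chainPotential R src v :=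
  Finset.le_sup' (fun C => G.chainGain src C v) hC

lemma exists_chainPotential_eq (R : Finset (V × V)) (src v : V) :
    ∃ C ∈ R.nodupLists, G.chainPotential R src v = G.chainGain src C v :=
  Finset.exists_mem_eq_sup' _ _

lemma chainPotential_sub_dist_le {u v : V} (h : G.Reachable u v) :
    G.chainPotential R src u - G.dist u v ≤ G.chainPotential R src v := by
  obtain ⟨C, hC, hu⟩ := exists_chainPotential_eq (G := G) R src u
  rw [hu]
  exact (G.chainGain_sub_dist_le h src C).trans (chainGain_le_chainPotential hC v)

lemma chainPotential_add_dist_le (hR : G.IsCyclicallyMonotone R) {a b : V} (hab : (a, b) ∈ R) :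
    G.chainPotential R src a + G.dist a b ≤ G.chainPotential R src b := by
  obtain ⟨C, hC, ha⟩ := exists_chainPotential_eq (G := G) R src a
  obtain ⟨hCnd, hCR⟩ := Finset.mem_nodupLists.1 hC
  rw [ha]
  by_cases hin : (a, b) ∈ C
  · -- a chain through `(a, b)` is cut there; the discarded cycle has nonpositive gain
    obtain ⟨P, Q, rfl⟩ := List.append_of_mem hin
    have hsub : (P ++ [(a, b)]).Sublist (P ++ (a, b) :: Q) :=
      ((List.nil_sublist Q).cons_cons (a, b)).append_left P
    have hP : P ++ [(a, b)] ∈ R.nodupLists :=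
      Finset.mem_nodupLists.2 ⟨hCnd.sublist hsub, fun p hp => hCR p (hsub.subset hp)⟩
    have hcycle := hR (a, b) hab Q fun p hp => hCR p (by simp [hp])
    calc G.chainGain src (P ++ (a, b) :: Q) a + G.dist a b
        = G.chainGain src P a + G.chainGain a ((a, b) :: Q) a + G.dist a b := by
          rw [chainGain_append_cons]
      _ ≤ G.chainGain src (P ++ [(a, b)]) b := by
          rw [chainGain_append_singleton]; linarith
      _ ≤ G.chainPotential R src b := chainGain_le_chainPotential hP b
  · have hC' : C ++ [(a, b)] ∈ R.nodupLists := by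
      refine Finset.mem_nodupLists.2 ⟨hCnd.append (List.nodup_singleton _) ?_, ?_⟩
      · simpa using hin
      · intro p hp
        rcases List.mem_append.1 hp with hp | hp
        · exact hCR p hp
        · rw [List.mem_singleton.1 hp]; exact hab
    calc G.chainGain src C a + G.dist a b = G.chainGain src (C ++ [(a, b)]) b :=
          (chainGain_append_singleton G src C (a, b)).symm
      _ ≤ G.chainPotential R src b := chainGain_le_chainPotential hC' b

end SimpleGraph

section Plans

variable {s : Finset V} {m m₁ m₂ : V → ℝ} {A : V → V → ℝ}

structure IsProbOn_s11 (s : Finset V) (m : V → ℝ) : Prop where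
  nonneg : ∀ u, 0 ≤ m u
  support_subset : Function.support m ⊆ s
  sum_eq_one : ∑ u ∈ s, m u = 1

lemma IsProbOn_s11.eq_zero (h : IsProbOn_s11 s m) {u : V} (hu : u ∉ s) : m u = 0 :=
  Function.notMem_support.1 fun hm => hu (h.support_subset hm)

lemma IsProbOn_s11.mono {t : Finset V} (h : IsProbOn_s11 s m) (hst : s ⊆ t) : IsProbOn_s11 t m where
  nonneg := h.nonneg
  support_subset := h.support_subset.trans (Finset.coe_subset.2 hst)
  sum_eq_one := by
    rw [← Finset.sum_subset hst fun u _ hu => h.eq_zero hu, h.sum_eq_one]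

lemma IsProbOn_s11.le_one (h : IsProbOn_s11 s m) (u : V) : m u ≤ 1 := by
  by_cases hu : u ∈ s
  · exact h.sum_eq_one ▸ Finset.single_le_sum (fun v _ => h.nonneg v) hu
  · rw [h.eq_zero hu]; exact zero_le_one

structure IsPlanOn (s : Finset V) (m₁ m₂ : V → ℝ) (A : V → V → ℝ) : Prop where
  nonneg : ∀ u v, 0 ≤ A u v
  eq_zero : ∀ u v, (u, v) ∉ s ×ˢ s → A u v = 0
  sum_row : ∀ u, ∑ v ∈ s, A u v = m₁ u
  sum_col : ∀ v, ∑ u ∈ s, A u v = m₂ v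

noncomputable def planCost (G : SimpleGraph V) (s : Finset V) (A : V → V → ℝ) : ℝ :=
  ∑ q ∈ s ×ˢ s, A q.1 q.2 * G.dist q.1 q.2

lemma IsPlanOn.mem_of_ne_zero (hA : IsPlanOn s m₁ m₂ A) {u v : V} (h : A u v ≠ 0) :
    (u, v) ∈ s ×ˢ s :=
  not_not.1 fun hn => h (hA.eq_zero u v hn)

lemma IsPlanOn.le_one (hA : IsPlanOn s m₁ m₂ A) (h₁ : IsProbOn_s11 s m₁) (u v : V) : A u v ≤ 1 := by
  by_cases hv : v ∈ s
  · calc A u v ≤ ∑ v' ∈ s, A u v' := Finset.single_le_sum (fun v' _ => hA.nonneg u v') hv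
      _ = m₁ u := hA.sum_row u
      _ ≤ 1 := h₁.le_one u
  · rw [hA.eq_zero u v (by simp [hv])]; exact zero_le_one

lemma IsPlanOn.finsum_eq_planCost (G : SimpleGraph V) (hA : IsPlanOn s m₁ m₂ A) :
    ∑ᶠ p : V × V, A p.1 p.2 * (G.dist p.1 p.2 : ℝ) = planCost G s A := by
  refine finsum_eq_sum_of_support_subset _ fun q hq => ?_
  exact hA.mem_of_ne_zero (left_ne_zero_of_mul (Function.mem_support.1 hq))

lemma IsCoupling.mem_of_ne_zero (hA : IsCoupling m₁ m₂ A) (h₁ : IsProbOn_s11 s m₁)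
    (h₂ : IsProbOn_s11 s m₂) {u v : V} (huv : A u v ≠ 0) : (u, v) ∈ s ×ˢ s := by
  obtain ⟨hfin, hbnd, hrow, hcol⟩ := hA
  have hpos : 0 < A u v := (hbnd u v).1.lt_of_ne' huv
  have hrowfin : (Function.support fun v' => A u v').Finite :=
    (hfin.image Prod.snd).subset fun v' hv' => ⟨(u, v'), hv', rfl⟩
  have hcolfin : (Function.support fun u' => A u' v).Finite :=
    (hfin.image Prod.fst).subset fun u' hu' => ⟨(u', v), hu', rfl⟩
  have hu : 0 < m₁ u := hrow u ▸ hpos.trans_le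
    (single_le_finsum v hrowfin fun v' => (hbnd u v').1)
  have hv : 0 < m₂ v := hcol v ▸ hpos.trans_le
    (single_le_finsum u hcolfin fun u' => (hbnd u' v).1)
  exact Finset.mem_product.2 ⟨h₁.support_subset hu.ne', h₂.support_subset hv.ne'⟩

lemma isCoupling_iff_isPlanOn (h₁ : IsProbOn_s11 s m₁) (h₂ : IsProbOn_s11 s m₂) :
    IsCoupling m₁ m₂ A ↔ IsPlanOn s m₁ m₂ A := by
  constructor
  · intro hc
    have hsupp : ∀ u v, A u v ≠ 0 → (u, v) ∈ s ×ˢ s := fun u v => hc.mem_of_ne_zero h₁ h₂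
    obtain ⟨-, hbnd, hrow, hcol⟩ := hc
    refine ⟨fun u v => (hbnd u v).1, fun u v h => not_not.1 (mt (hsupp u v) h), fun u => ?_,
      fun v => ?_⟩
    · rw [← hrow u]
      exact (finsum_eq_sum_of_support_subset _ fun v hv => (Finset.mem_product.1
        (hsupp u v hv)).2).symm
    · rw [← hcol v]
      exact (finsum_eq_sum_of_support_subset _ fun u hu => (Finset.mem_product.1
        (hsupp u v hu)).1).symm
  · intro hA
    refine ⟨(s ×ˢ s).finite_toSet.subset fun q hq => hA.mem_of_ne_zero hq,
      fun u v => ⟨hA.nonneg u v, hA.le_one h₁ u v⟩, fun u => ?_, fun v => ?_⟩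
    · rw [← hA.sum_row u]
      exact finsum_eq_sum_of_support_subset _ fun v hv =>
        (Finset.mem_product.1 (hA.mem_of_ne_zero hv)).2
    · rw [← hA.sum_col v]
      exact finsum_eq_sum_of_support_subset _ fun u hu =>
        (Finset.mem_product.1 (hA.mem_of_ne_zero hu)).1

lemma transportDist_eq_sInf (G : SimpleGraph V) (h₁ : IsProbOn_s11 s m₁) (h₂ : IsProbOn_s11 s m₂) :
    transportDist G m₁ m₂ = sInf (planCost G s '' {A | IsPlanOn s m₁ m₂ A}) := by
  unfold transportDist
  congr 1
  ext w
  simp only [Set.mem_ofPred_eq, Set.mem_image, isCoupling_iff_isPlanOn h₁ h₂]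
  constructor
  · rintro ⟨A, hA, rfl⟩
    exact ⟨A, hA, (hA.finsum_eq_planCost G).symm⟩
  · rintro ⟨A, hA, rfl⟩
    exact ⟨A, hA, (hA.finsum_eq_planCost G).symm⟩

lemma isPlanOn_mul (h₁ : IsProbOn_s11 s m₁) (h₂ : IsProbOn_s11 s m₂) :
    IsPlanOn s m₁ m₂ fun u v => m₁ u * m₂ v where
  nonneg u v := mul_nonneg (h₁.nonneg u) (h₂.nonneg v)
  eq_zero u v huv := by
    rcases not_and_or.1 (Finset.mem_product.not.1 huv) with hu | hv
    · rw [h₁.eq_zero hu, zero_mul]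
    · rw [h₂.eq_zero hv, mul_zero]
  sum_row u := by rw [← Finset.mul_sum, h₂.sum_eq_one, mul_one]
  sum_col v := by rw [← Finset.sum_mul, h₁.sum_eq_one, one_mul]

lemma isCompact_setOf_isPlanOn (h₁ : IsProbOn_s11 s m₁) :
    IsCompact {A : V → V → ℝ | IsPlanOn s m₁ m₂ A} := by
  have hbox : IsCompact (Set.univ.pi fun _ : V => Set.univ.pi fun _ : V => Set.Icc (0 : ℝ) 1) :=
    isCompact_univ_pi fun _ => isCompact_univ_pi fun _ => isCompact_Icc
  refine hbox.of_isClosed_subset ?_ fun A hA u _ v _ => ⟨hA.nonneg u v, hA.le_one h₁ u v⟩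
  have hset : {A : V → V → ℝ | IsPlanOn s m₁ m₂ A} =
      (⋂ u, ⋂ v, {A | 0 ≤ A u v}) ∩ (⋂ u, ⋂ v, {A | (u, v) ∉ s ×ˢ s → A u v = 0}) ∩
        (⋂ u, {A | ∑ v ∈ s, A u v = m₁ u}) ∩ ⋂ v, {A | ∑ u ∈ s, A u v = m₂ v} := by
    ext A
    simp only [Set.mem_ofPred_eq, Set.mem_inter_iff, Set.mem_iInter]
    exact ⟨fun h => ⟨⟨⟨h.1, h.2⟩, h.3⟩, h.4⟩, fun ⟨⟨⟨h1, h2⟩, h3⟩, h4⟩ => ⟨h1, h2, h3, h4⟩⟩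
  have hev : ∀ u v : V, Continuous fun A : V → V → ℝ => A u v := fun u v => by fun_prop
  rw [hset]
  refine ((isClosed_iInter fun u => isClosed_iInter fun v => isClosed_le continuous_const
    (hev u v)).inter (isClosed_iInter fun u => isClosed_iInter fun v => ?_)).inter
    (isClosed_iInter fun u => isClosed_eq (continuous_finsetSum _ fun v _ => hev u v)
      continuous_const) |>.inter
    (isClosed_iInter fun v => isClosed_eq (continuous_finsetSum _ fun u _ => hev u v)
      continuous_const)
  by_cases huv : (u, v) ∈ s ×ˢ s
  · simp [huv]
  · simpa [huv] using isClosed_eq (hev u v) continuous_const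

lemma exists_isMinOn_planCost (G : SimpleGraph V) (h₁ : IsProbOn_s11 s m₁) (h₂ : IsProbOn_s11 s m₂) :
    ∃ A, IsPlanOn s m₁ m₂ A ∧ IsMinOn (planCost G s) {A | IsPlanOn s m₁ m₂ A} A := by
  have hcont : Continuous (planCost G s) := by unfold planCost; fun_prop
  exact (isCompact_setOf_isPlanOn h₁).exists_isMinOn ⟨_, isPlanOn_mul h₁ h₂⟩ hcont.continuousOn

lemma transportDist_eq_planCost (G : SimpleGraph V) (h₁ : IsProbOn_s11 s m₁) (h₂ : IsProbOn_s11 s m₂)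
    (hA : IsPlanOn s m₁ m₂ A) (hmin : IsMinOn (planCost G s) {A | IsPlanOn s m₁ m₂ A} A) :
    transportDist G m₁ m₂ = planCost G s A := by
  rw [transportDist_eq_sInf G h₁ h₂]
  refine IsLeast.csInf_eq ⟨Set.mem_image_of_mem _ hA, ?_⟩
  rintro _ ⟨B, hB, rfl⟩
  exact isMinOn_iff.1 hmin B hB

end Plans

section CyclicalMonotonicity

open Topology

variable [DecidableEq V] {G : SimpleGraph V} {s : Finset V} {m₁ m₂ : V → ℝ} {A : V → V → ℝ}

lemma SimpleGraph.sumDist_eq_sum_count {L : List (V × V)} {t : Finset (V × V)}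
    (hL : ∀ q ∈ L, q ∈ t) : (G.sumDist L : ℝ) = ∑ q ∈ t, (L.count q : ℝ) * G.dist q.1 q.2 := by
  induction L with
  | nil => simp
  | cons q L ih =>
    have hq : q ∈ t := hL q List.mem_cons_self
    simp only [SimpleGraph.sumDist_cons, List.count_cons, beq_iff_eq, Nat.cast_add, add_mul,
      Finset.sum_add_distrib, ← ih fun p hp => hL p (List.mem_cons_of_mem _ hp)]
    simp [hq, add_comm]

lemma IsPlanOn.perturb (hA : IsPlanOn s m₁ m₂ A) {L L' : List (V × V)} {ε : ℝ} (hε : 0 < ε)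
    (hL : ∀ q ∈ L, ε * L.count q ≤ A q.1 q.2) (hL' : ∀ q ∈ L', q ∈ s ×ˢ s)
    (hfst : (L.map Prod.fst).Perm (L'.map Prod.fst))
    (hsnd : (L.map Prod.snd).Perm (L'.map Prod.snd)) :
    IsPlanOn s m₁ m₂ fun u v => A u v + ε * ((L'.count (u, v) : ℝ) - L.count (u, v)) := by
  have hLs : ∀ q ∈ L, q ∈ s ×ˢ s := fun q hq => hA.mem_of_ne_zero <| ne_of_gt <|
    (mul_pos hε (Nat.cast_pos.2 (List.count_pos_iff.2 hq))).trans_le (hL q hq)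
  refine ⟨fun u v => ?_, fun u v huv => ?_, fun u => ?_, fun v => ?_⟩
  · have h' : 0 ≤ ε * (L'.count (u, v) : ℝ) := mul_nonneg hε.le (Nat.cast_nonneg _)
    by_cases huv : (u, v) ∈ L
    · linarith [hL _ huv]
    · rw [List.count_eq_zero_of_not_mem huv, Nat.cast_zero]
      linarith [hA.nonneg u v]
  · rw [hA.eq_zero u v huv, List.count_eq_zero_of_not_mem (mt (hL' _) huv),
      List.count_eq_zero_of_not_mem (mt (hLs _) huv)]
    simp
  · simp only [Finset.sum_add_distrib, ← Finset.mul_sum, Finset.sum_sub_distrib, hA.sum_row]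
    rw [← Nat.cast_sum, ← Nat.cast_sum,
      List.sum_count_pair_eq_count_fst (fun q hq => (Finset.mem_product.1 (hL' q hq)).2),
      List.sum_count_pair_eq_count_fst (fun q hq => (Finset.mem_product.1 (hLs q hq)).2),
      hfst.count_eq]
    simp
  · simp only [Finset.sum_add_distrib, ← Finset.mul_sum, Finset.sum_sub_distrib, hA.sum_col]
    rw [← Nat.cast_sum, ← Nat.cast_sum,
      List.sum_count_pair_eq_count_snd (fun q hq => (Finset.mem_product.1 (hL' q hq)).1),
      List.sum_count_pair_eq_count_snd (fun q hq => (Finset.mem_product.1 (hLs q hq)).1),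
      hsnd.count_eq]
    simp

lemma planCost_perturb {L L' : List (V × V)} (hL : ∀ q ∈ L, q ∈ s ×ˢ s)
    (hL' : ∀ q ∈ L', q ∈ s ×ˢ s) (ε : ℝ) :
    planCost G s (fun u v => A u v + ε * ((L'.count (u, v) : ℝ) - L.count (u, v))) =
      planCost G s A + ε * ((G.sumDist L' : ℝ) - G.sumDist L) := by
  simp only [planCost, G.sumDist_eq_sum_count hL, G.sumDist_eq_sum_count hL', add_mul, mul_assoc,
    Finset.sum_add_distrib, ← Finset.mul_sum, ← Finset.sum_sub_distrib, sub_mul]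

lemma IsPlanOn.sumDist_le_of_isMinOn (hA : IsPlanOn s m₁ m₂ A)
    (hmin : IsMinOn (planCost G s) {A | IsPlanOn s m₁ m₂ A} A) {L L' : List (V × V)}
    (hL : ∀ q ∈ L, A q.1 q.2 ≠ 0) (hL' : ∀ q ∈ L', q ∈ s ×ˢ s)
    (hfst : (L.map Prod.fst).Perm (L'.map Prod.fst))
    (hsnd : (L.map Prod.snd).Perm (L'.map Prod.snd)) :
    G.sumDist L ≤ G.sumDist L' := by
  have hpos : ∀ q ∈ L, 0 < A q.1 q.2 := fun q hq => (hA.nonneg q.1 q.2).lt_of_ne' (hL q hq)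
  obtain ⟨ε, hεL, hε⟩ : ∃ ε, (∀ q ∈ L, ε * L.count q ≤ A q.1 q.2) ∧ 0 < ε := by
    have hsmall : ∀ q ∈ L.toFinset, ∀ᶠ ε in 𝓝 (0 : ℝ), ε * L.count q ≤ A q.1 q.2 :=
      fun q hq => Filter.Tendsto.eventually_le_const (hpos q (List.mem_toFinset.1 hq))
        (by simpa using (continuous_mul_const (L.count q : ℝ)).tendsto 0)
    have hev : ∀ᶠ ε in 𝓝[>] (0 : ℝ), (∀ q ∈ L.toFinset, ε * L.count q ≤ A q.1 q.2) ∧ 0 < ε :=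
      (((Finset.eventually_all _).2 hsmall).filter_mono nhdsWithin_le_nhds).and
        self_mem_nhdsWithin
    exact hev.exists.imp fun ε h => ⟨fun q hq => h.1 q (List.mem_toFinset.2 hq), h.2⟩
  have hB := hA.perturb hε hεL hL' hfst hsnd
  have hcost := isMinOn_iff.1 hmin _ hB
  rw [planCost_perturb (fun q hq => hA.mem_of_ne_zero (hL q hq)) hL'] at hcost
  have hgain : 0 ≤ (G.sumDist L' : ℝ) - G.sumDist L :=
    (mul_nonneg_iff_of_pos_left hε).1 (by linarith)
  exact_mod_cast sub_nonneg.1 hgain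

lemma IsPlanOn.isCyclicallyMonotone (hA : IsPlanOn s m₁ m₂ A)
    (hmin : IsMinOn (planCost G s) {A | IsPlanOn s m₁ m₂ A} A) :
    G.IsCyclicallyMonotone ((s ×ˢ s).filter fun q => A q.1 q.2 ≠ 0) := by
  rintro ⟨a, b⟩ hab Q hQ
  rw [SimpleGraph.chainGain_cycle, sub_nonpos, Nat.cast_le]
  obtain ⟨habs, habA⟩ := Finset.mem_filter.1 hab
  have hQs : ∀ q ∈ Q, q ∈ s ×ˢ s ∧ A q.1 q.2 ≠ 0 := fun q hq => Finset.mem_filter.1 (hQ q hq)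
  refine hA.sumDist_le_of_isMinOn hmin ?_ ?_ ?_ ?_
  · intro q hq
    rcases List.mem_cons.1 hq with rfl | hq
    · exact habA
    · exact (hQs q hq).2
  · exact SimpleGraph.chainLinks_mem_product (Finset.mem_product.1 habs).2
      (Finset.mem_product.1 habs).1 fun q hq => (hQs q hq).1
  · rw [SimpleGraph.map_fst_chainLinks]
    exact List.perm_append_singleton _ _ |>.symm
  · rw [SimpleGraph.map_snd_chainLinks]
    rfl

end CyclicalMonotonicity

section Potential

variable {G : SimpleGraph V} {s : Finset V} {m₁ m₂ : V → ℝ} {A : V → V → ℝ}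

lemma IsPlanOn.planCost_eq_sum (hA : IsPlanOn s m₁ m₂ A) (φ : V → ℝ)
    (hφ : ∀ u v, A u v ≠ 0 → φ u - φ v = G.dist u v) :
    planCost G s A = ∑ w ∈ s, φ w * (m₁ w - m₂ w) := by
  have htight : ∀ q ∈ s ×ˢ s, A q.1 q.2 * G.dist q.1 q.2 = A q.1 q.2 * (φ q.1 - φ q.2) := by
    intro q _
    by_cases hq : A q.1 q.2 = 0
    · simp [hq]
    · rw [hφ _ _ hq]
  rw [planCost, Finset.sum_congr rfl htight]
  simp only [mul_sub, Finset.sum_sub_distrib]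
  rw [Finset.sum_product, Finset.sum_product_right]
  simp only [mul_comm (A _ _), ← Finset.mul_sum, hA.sum_row, hA.sum_col]

theorem exists_int_potential (x : V) (hs : ∀ u ∈ s, G.Reachable x u) (h₁ : IsProbOn_s11 s m₁)
    (h₂ : IsProbOn_s11 s m₂) :
    ∃ φ : V → ℤ, (∀ u w, G.Reachable u w → |(φ u : ℝ) - φ w| ≤ G.dist u w) ∧
      transportDist G m₁ m₂ = ∑ᶠ w, (φ w : ℝ) * (m₁ w - m₂ w) := by
  classical
  obtain ⟨A, hA, hmin⟩ := exists_isMinOn_planCost G h₁ h₂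
  set R := (s ×ˢ s).filter fun q => A q.1 q.2 ≠ 0
  have hR : G.IsCyclicallyMonotone R := hA.isCyclicallyMonotone hmin
  set φ : V → ℤ := fun w => -G.chainPotential R x w
  have hlip {u v : V} (h : G.Reachable u v) : φ v - G.dist u v ≤ φ u := by
    have := SimpleGraph.chainPotential_sub_dist_le (src := x) (R := R) h
    simp only [φ]
    linarith
  refine ⟨φ, fun u w huw => ?_, ?_⟩
  · have h₁ := hlip huw
    have h₂ := hlip huw.symm
    rw [G.dist_comm] at h₂
    have : |φ u - φ w| ≤ G.dist u w := abs_le.2 ⟨by linarith, by linarith⟩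
    exact_mod_cast this
  · have htight : ∀ u v, A u v ≠ 0 → (φ u : ℝ) - φ v = G.dist u v := by
      intro u v huv
      have hmem := hA.mem_of_ne_zero huv
      have huvR : (u, v) ∈ R := Finset.mem_filter.2 ⟨hmem, huv⟩
      obtain ⟨hu, hv⟩ := Finset.mem_product.1 hmem
      have h₁ := SimpleGraph.chainPotential_add_dist_le (src := x) hR huvR
      have h₂ := hlip ((hs v hv).symm.trans (hs u hu))
      rw [G.dist_comm] at h₂
      have : φ u - φ v = G.dist u v := by simp only [φ] at h₂ ⊢; linarith
      exact_mod_cast this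
    rw [transportDist_eq_planCost G h₁ h₂ hA hmin, hA.planCost_eq_sum _ htight]
    refine (finsum_eq_sum_of_support_subset _ fun w hw => ?_).symm
    by_contra hws
    exact hw (by simp [h₁.eq_zero hws, h₂.eq_zero hws])

end Potential

lemma isProbOn_lazyWalk_s11 [DecidableEq V] (G : SimpleGraph V) [G.LocallyFinite] {p : ℝ}
    (hp : p ∈ Set.Icc (0 : ℝ) 1) {x : V} (hx : 0 < G.degree x) :
    IsProbOn_s11 (insert x (G.neighborFinset x)) (lazyWalk G p x) where
  nonneg u := by
    unfold lazyWalk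
    split_ifs
    · exact hp.1
    · exact div_nonneg (by linarith [hp.2]) (Nat.cast_nonneg _)
    · exact le_rfl
  support_subset u hu := by
    simp only [Function.mem_support, lazyWalk] at hu
    split_ifs at hu with h₁ h₂
    · simp [h₁]
    · simp [h₂]
    · exact absurd rfl hu
  sum_eq_one := by
    have hxN : x ∉ G.neighborFinset x := by simp
    have hN : ∀ u ∈ G.neighborFinset x, lazyWalk G p x u = (1 - p) / G.degree x := by
      intro u hu
      rw [SimpleGraph.mem_neighborFinset] at hu
      simp [lazyWalk, hu, hu.ne']
    rw [Finset.sum_insert hxN, Finset.sum_congr rfl hN, Finset.sum_const,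
      SimpleGraph.card_neighborFinset_eq_degree, nsmul_eq_mul]
    have hdeg : (G.degree x : ℝ) ≠ 0 := Nat.cast_ne_zero.2 hx.ne'
    field_simp
    simp [lazyWalk]

/-- Lemma 9 (integer-valued Kantorovich potential): for a locally finite graph `G`,
adjacent vertices `x ~ y` and `p ∈ [0,1]`, there is an integer-valued `1`-Lipschitz
function `φ` with `W(m_x^p, m_y^p) = Σ_w φ(w) (m_x^p(w) - m_y^p(w))`. -/
theorem integer_valued_potential (G : SimpleGraph V) [G.LocallyFinite]
    (x y : V) (hxy : G.Adj x y) (p : ℝ) (hp : p ∈ Set.Icc (0:ℝ) 1) :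
    ∃ φ : V → ℝ, (∀ w : V, ∃ n : ℤ, φ w = (n : ℝ)) ∧
      (∀ u w : V, G.Reachable u w → |φ u - φ w| ≤ (G.dist u w : ℝ)) ∧
      transportDist G (lazyWalk G p x) (lazyWalk G p y)
        = ∑ᶠ w : V, φ w * (lazyWalk G p x w - lazyWalk G p y w) := by
  classical
  set s := insert x (G.neighborFinset x) ∪ insert y (G.neighborFinset y)
  have hs : ∀ u ∈ s, G.Reachable x u := by
    intro u hu
    simp only [s, Finset.mem_union, Finset.mem_insert, SimpleGraph.mem_neighborFinset] at hu
    rcases hu with (rfl | hu) | (rfl | hu)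
    · rfl
    · exact hu.reachable
    · exact hxy.reachable
    · exact hxy.reachable.trans hu.reachable
  have hx : IsProbOn_s11 s (lazyWalk G p x) :=
    (isProbOn_lazyWalk_s11 G hp ((G.degree_pos_iff_exists_adj x).2 ⟨y, hxy⟩)).mono
      Finset.subset_union_left
  have hy : IsProbOn_s11 s (lazyWalk G p y) :=
    (isProbOn_lazyWalk_s11 G hp ((G.degree_pos_iff_exists_adj y).2 ⟨x, hxy.symm⟩)).mono
      Finset.subset_union_right
  obtain ⟨φ, hφ, hW⟩ := exists_int_potential x hs hx hy
  exact ⟨fun w => φ w, fun w => ⟨φ w, rfl⟩, hφ, hW⟩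
end

section
/- Let G be a simple connected graph. For every pair of distinct vertices x, y, the function α ↦ κ_α(x,y) is concave on [0,1]. -/
open Filter Set

variable {V : Type*}

/-! The lazy walk `m_x^α` is affine in `α`, and a convex combination of couplings of two
pairs of marginals couples the combined marginals at the combined cost. So the transportation
distance is jointly convex, `α ↦ W(m_x^α, m_y^α)` is convex on `[0,1]`, and
`κ_α(x,y) = 1 - W/d(x,y)` is concave. -/

open Function
open scoped Pointwise

section Coupling

variable {m m₁ m₂ n₁ n₂ : V → ℝ} {A B : V → V → ℝ} {a b : ℝ}

structure IsProbDist (m : V → ℝ) : Prop where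
  hasFiniteSupport : m.HasFiniteSupport
  nonneg : ∀ v, 0 ≤ m v
  finsum_eq_one : ∑ᶠ v, m v = 1

lemma IsProbDist.le_one (hm : IsProbDist m) (v : V) : m v ≤ 1 :=
  hm.finsum_eq_one ▸ single_le_finsum v hm.hasFiniteSupport hm.nonneg

lemma IsCoupling.hasFiniteSupport_row (hA : IsCoupling m₁ m₂ A) (x : V) :
    (A x).HasFiniteSupport :=
  (hA.1.preimage (Prod.mk_right_injective x).injOn).subset fun _ hy => hy

lemma IsCoupling.hasFiniteSupport_col (hA : IsCoupling m₁ m₂ A) (y : V) :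
    (fun x => A x y).HasFiniteSupport :=
  (hA.1.preimage (Prod.mk_left_injective y).injOn).subset fun _ hx => hx

lemma isCoupling_mul_s13 (hm₁ : IsProbDist m₁) (hm₂ : IsProbDist m₂) :
    IsCoupling m₁ m₂ fun u v => m₁ u * m₂ v := by
  refine ⟨?_, fun u v => ⟨?_, ?_⟩, fun u => ?_, fun v => ?_⟩
  · refine (hm₁.hasFiniteSupport.prod hm₂.hasFiniteSupport).subset fun p hp => ?_
    exact ⟨left_ne_zero_of_mul hp, right_ne_zero_of_mul hp⟩
  · exact mul_nonneg (hm₁.nonneg u) (hm₂.nonneg v)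
  · exact mul_le_one₀ (hm₁.le_one u) (hm₂.nonneg v) (hm₂.le_one v)
  · rw [← mul_finsum _ _, hm₂.finsum_eq_one, mul_one]
  · rw [← finsum_mul _ _, hm₁.finsum_eq_one, one_mul]

lemma finsum_mul_add_mul {ι : Type*} {f g : ι → ℝ} (hf : f.HasFiniteSupport)
    (hg : g.HasFiniteSupport) (a b : ℝ) :
    ∑ᶠ i, (a * f i + b * g i) = a * ∑ᶠ i, f i + b * ∑ᶠ i, g i := by
  rw [finsum_add_distrib (by fun_prop) (by fun_prop), mul_finsum, mul_finsum]

lemma IsCoupling.convexComb (hA : IsCoupling m₁ m₂ A) (hB : IsCoupling n₁ n₂ B)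
    (ha : 0 ≤ a) (hb : 0 ≤ b) (hab : a + b = 1) :
    IsCoupling (a • m₁ + b • n₁) (a • m₂ + b • n₂) (a • A + b • B) := by
  refine ⟨?_, fun u v => ⟨?_, ?_⟩, fun u => ?_, fun v => ?_⟩
  · refine (hA.1.union hB.1).subset fun p hp => ?_
    by_contra hp'
    simp only [mem_union, mem_support, not_or, not_not] at hp'
    simp_all
  · simp only [Pi.add_apply, Pi.smul_apply, smul_eq_mul]
    have := (hA.2.1 u v).1; have := (hB.2.1 u v).1
    positivity
  · simp only [Pi.add_apply, Pi.smul_apply, smul_eq_mul]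
    nlinarith [hA.2.1 u v, hB.2.1 u v]
  · simp only [Pi.add_apply, Pi.smul_apply, smul_eq_mul]
    rw [finsum_mul_add_mul (hA.hasFiniteSupport_row u) (hB.hasFiniteSupport_row u),
      hA.2.2.1, hB.2.2.1]
  · simp only [Pi.add_apply, Pi.smul_apply, smul_eq_mul]
    rw [finsum_mul_add_mul (hA.hasFiniteSupport_col v) (hB.hasFiniteSupport_col v),
      hA.2.2.2, hB.2.2.2]

end Coupling

section Transport

variable (G : SimpleGraph V) {m₁ m₂ n₁ n₂ : V → ℝ} {a b : ℝ}

noncomputable def couplingCost (A : V → V → ℝ) : ℝ :=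
  ∑ᶠ p : V × V, A p.1 p.2 * (G.dist p.1 p.2 : ℝ)

def couplingCosts (m₁ m₂ : V → ℝ) : Set ℝ :=
  {w | ∃ A : V → V → ℝ, IsCoupling m₁ m₂ A ∧ w = couplingCost G A}

lemma transportDist_eq_sInf_couplingCosts :
    transportDist G m₁ m₂ = sInf (couplingCosts G m₁ m₂) :=
  rfl

lemma couplingCosts_bddBelow : BddBelow (couplingCosts G m₁ m₂) := by
  refine ⟨0, ?_⟩
  rintro _ ⟨A, hA, rfl⟩
  exact finsum_nonneg fun p => mul_nonneg (hA.2.1 _ _).1 (Nat.cast_nonneg _)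

lemma couplingCosts_nonempty (hm₁ : IsProbDist m₁) (hm₂ : IsProbDist m₂) :
    (couplingCosts G m₁ m₂).Nonempty :=
  ⟨_, _, isCoupling_mul_s13 hm₁ hm₂, rfl⟩

lemma couplingCost_convexComb {A B : V → V → ℝ}
    (hA : (support fun p : V × V => A p.1 p.2).Finite)
    (hB : (support fun p : V × V => B p.1 p.2).Finite) :
    couplingCost G (a • A + b • B) = a * couplingCost G A + b * couplingCost G B := by
  have hA' : HasFiniteSupport fun p : V × V => A p.1 p.2 * (G.dist p.1 p.2 : ℝ) :=
    hA.subset (support_mul_subset_left _ _)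
  have hB' : HasFiniteSupport fun p : V × V => B p.1 p.2 * (G.dist p.1 p.2 : ℝ) :=
    hB.subset (support_mul_subset_left _ _)
  rw [couplingCost, couplingCost, couplingCost, ← finsum_mul_add_mul hA' hB']
  exact finsum_congr fun p => by simp only [Pi.add_apply, Pi.smul_apply, smul_eq_mul]; ring

lemma couplingCosts_convexComb_subset (ha : 0 ≤ a) (hb : 0 ≤ b) (hab : a + b = 1) :
    a • couplingCosts G m₁ m₂ + b • couplingCosts G n₁ n₂ ⊆
      couplingCosts G (a • m₁ + b • n₁) (a • m₂ + b • n₂) := by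
  rintro _ ⟨_, ⟨_, ⟨A, hA, rfl⟩, rfl⟩, _, ⟨_, ⟨B, hB, rfl⟩, rfl⟩, rfl⟩
  exact ⟨a • A + b • B, hA.convexComb hB ha hb hab,
    (couplingCost_convexComb G hA.1 hB.1).symm⟩

theorem transportDist_convexComb_le (hm : (couplingCosts G m₁ m₂).Nonempty)
    (hn : (couplingCosts G n₁ n₂).Nonempty) (ha : 0 ≤ a) (hb : 0 ≤ b) (hab : a + b = 1) :
    transportDist G (a • m₁ + b • n₁) (a • m₂ + b • n₂) ≤
      a * transportDist G m₁ m₂ + b * transportDist G n₁ n₂ := by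
  simp only [transportDist_eq_sInf_couplingCosts]
  calc sInf (couplingCosts G (a • m₁ + b • n₁) (a • m₂ + b • n₂))
      ≤ sInf (a • couplingCosts G m₁ m₂ + b • couplingCosts G n₁ n₂) :=
        csInf_le_csInf (couplingCosts_bddBelow G) (hm.smul_set.add hn.smul_set)
          (couplingCosts_convexComb_subset G ha hb hab)
    _ = a * sInf (couplingCosts G m₁ m₂) + b * sInf (couplingCosts G n₁ n₂) := by
        rw [csInf_add hm.smul_set ((couplingCosts_bddBelow G).smul_of_nonneg ha)
          hn.smul_set ((couplingCosts_bddBelow G).smul_of_nonneg hb),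
          Real.sInf_smul_of_nonneg ha, Real.sInf_smul_of_nonneg hb, smul_eq_mul, smul_eq_mul]

end Transport

section LazyWalk

variable (G : SimpleGraph V) [G.LocallyFinite] {α : ℝ} {x y : V}

lemma lazyWalk_convexComb {a b : ℝ} (hab : a + b = 1) (α₁ α₂ : ℝ) (x : V) :
    lazyWalk G (a * α₁ + b * α₂) x = a • lazyWalk G α₁ x + b • lazyWalk G α₂ x := by
  obtain rfl : b = 1 - a := by linarith
  funext v
  simp only [lazyWalk, Pi.add_apply, Pi.smul_apply, smul_eq_mul]
  split_ifs <;> ring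

lemma support_lazyWalk_subset_s13 (α : ℝ) (x : V) :
    support (lazyWalk G α x) ⊆ insert x (G.neighborFinset x : Set V) := by
  intro v hv
  by_cases hvx : v = x
  · exact .inl hvx
  · by_cases hxv : G.Adj x v
    · exact .inr (by simpa using hxv)
    · simp [lazyWalk, hvx, hxv] at hv

lemma finsum_lazyWalk_s13 (hx : 0 < G.degree x) : ∑ᶠ v, lazyWalk G α x v = 1 := by
  classical
  rw [finsum_eq_finsetSum_of_support_subset _ (s := insert x (G.neighborFinset x))
    (by simpa using support_lazyWalk_subset_s13 G α x),
    Finset.sum_insert (G.notMem_neighborFinset_self x)]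
  have hneighbor : ∀ v ∈ G.neighborFinset x, lazyWalk G α x v = (1 - α) / G.degree x := by
    intro v hv
    have hxv : G.Adj x v := by simpa using hv
    simp [lazyWalk, hxv.ne', hxv]
  rw [Finset.sum_congr rfl hneighbor, Finset.sum_const, G.card_neighborFinset_eq_degree,
    nsmul_eq_mul, mul_div_cancel₀ _ (by positivity)]
  simp [lazyWalk]

lemma isProbDist_lazyWalk (hα : α ∈ Icc (0 : ℝ) 1) (hx : 0 < G.degree x) :
    IsProbDist (lazyWalk G α x) where
  hasFiniteSupport := (G.neighborFinset x).finite_toSet.insert x |>.subset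
    (support_lazyWalk_subset_s13 G α x)
  nonneg v := by
    unfold lazyWalk
    split_ifs
    · exact hα.1
    · exact div_nonneg (by linarith [hα.2]) (Nat.cast_nonneg _)
    · exact le_rfl
  finsum_eq_one := finsum_lazyWalk_s13 G hx

theorem convexOn_transportDist_lazyWalk (hx : 0 < G.degree x) (hy : 0 < G.degree y) :
    ConvexOn ℝ (Icc 0 1) fun α => transportDist G (lazyWalk G α x) (lazyWalk G α y) := by
  refine ⟨convex_Icc 0 1, fun α₁ hα₁ α₂ hα₂ a b ha hb hab => ?_⟩
  have hcosts : ∀ α ∈ Icc (0 : ℝ) 1,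
      (couplingCosts G (lazyWalk G α x) (lazyWalk G α y)).Nonempty := fun α hα =>
    couplingCosts_nonempty G (isProbDist_lazyWalk G hα hx) (isProbDist_lazyWalk G hα hy)
  simp only [smul_eq_mul, lazyWalk_convexComb G hab]
  exact transportDist_convexComb_le G (hcosts α₁ hα₁) (hcosts α₂ hα₂) ha hb hab

end LazyWalk

/-- For distinct vertices `x, y` of a simple connected graph, the map
`α ↦ κ_α(x,y)` is concave on `[0,1]`. -/
theorem alphaRicci_concave (G : SimpleGraph V) [G.LocallyFinite]
    (hconn : G.Connected) (x y : V) (hxy : x ≠ y) :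
    ConcaveOn ℝ (Set.Icc (0:ℝ) 1) (fun α : ℝ => alphaRicci G α x y) := by
  have hW := convexOn_transportDist_lazyWalk G ((hconn.preconnected x y).degree_pos_left hxy)
    ((hconn.preconnected x y).degree_pos_right hxy)
  have hκ : (fun α => alphaRicci G α x y) = (fun _ => 1) - fun α =>
      (G.dist x y : ℝ)⁻¹ • transportDist G (lazyWalk G α x) (lazyWalk G α y) := by
    funext α
    simp only [alphaRicci, Pi.sub_apply, smul_eq_mul, div_eq_inv_mul]
  rw [hκ]
  exact (concaveOn_const 1 (convex_Icc 0 1)).sub (hW.smul (by positivity))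
end
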